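/- arXiv:1603.03342 — 9 statements merged into one kernel-verified Lean document; each statement's English description precedes it below -/
import Mathlib

section
/- Let N ≥ 2, let m₁,…,m_N > 0, and let q = (q₁,…,q_N) be a nonsingular configuration in S³ with qᵢ = (xᵢ,yᵢ,zᵢ,wᵢ). For α,β ∈ ℝ let A_{α,β}(t) be the 4×4 block-diagonal matrix with upper block [[cos αt, −sin αt],[sin αt, cos αt]] acting on (x,y) and lower block [[cos βt, −sin βt],[sin βt, cos βt]] acting on (z,w). Then the curve t ↦ (A_{α,β}(t)q₁,…,A_{α,β}(t)q_N) satisfies, for all t ∈ ℝ and all i, the equations of motion mᵢ q̈ᵢ(t) = ∇_{qᵢ}U(q(t)) − mᵢ (q̇ᵢ(t)·q̇ᵢ(t)) qᵢ(t), if and only if for every i one has mᵢ(β² − α²)·(xᵢ(wᵢ²+zᵢ²), yᵢ(wᵢ²+zᵢ²), −zᵢ(xᵢ²+yᵢ²), −wᵢ(xᵢ²+yᵢ²)) = ∇_{qᵢ}U(q). -/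
noncomputable section
open Real Finset

/-- Vectors in `ℝ⁴`. -/
abbrev V4 : Type := Fin 4 → ℝ

/-- Euclidean dot product on `ℝ⁴`. -/
def dot4 (p q : V4) : ℝ := p 0 * q 0 + p 1 * q 1 + p 2 * q 2 + p 3 * q 3

/-- Minkowski bilinear form on `ℝ⁴`. -/
def mdot4 (p q : V4) : ℝ := p 0 * q 0 + p 1 * q 1 + p 2 * q 2 - p 3 * q 3

/-- The unit sphere `S³ ⊂ ℝ⁴`. -/
def sphere3 : Set V4 := {p | p 0 ^ 2 + p 1 ^ 2 + p 2 ^ 2 + p 3 ^ 2 = 1}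

/-- The upper hyperbolic sphere `H³ ⊂ ℝ⁴`. -/
def hyper3 : Set V4 := {p | p 0 ^ 2 + p 1 ^ 2 + p 2 ^ 2 - p 3 ^ 2 = -1 ∧ 0 < p 3}

/-- Inverse hyperbolic cosine. -/
def arcosh (x : ℝ) : ℝ := Real.log (x + Real.sqrt (x ^ 2 - 1))

/-- Spherical distance on `S³`. -/
def dS (p q : V4) : ℝ := Real.arccos (dot4 p q)

/-- Hyperbolic distance on `H³`. -/
def dH (p q : V4) : ℝ := _root_.arcosh (-(mdot4 p q))

/-- Gradient of the cotangent force function on `(S³)^N` at the body `i`. -/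
def gradUS {N : ℕ} (m : Fin N → ℝ) (q : Fin N → V4) (i : Fin N) : V4 :=
  ∑ j ∈ Finset.univ.erase i,
    (m i * m j / (Real.sin (dS (q i) (q j))) ^ 3) • (q j - Real.cos (dS (q i) (q j)) • q i)

/-- Gradient of the cotangent force function on `(H³)^N` at the body `i`. -/
def gradUH {N : ℕ} (m : Fin N → ℝ) (q : Fin N → V4) (i : Fin N) : V4 :=
  ∑ j ∈ Finset.univ.erase i,
    (m i * m j / (Real.sinh (dH (q i) (q j))) ^ 3) • (q j - Real.cosh (dH (q i) (q j)) • q i)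

/-- Gradient of the moment of inertia `I(q) = Σ mᵢ(xᵢ²+yᵢ²)` on `(S³)^N` at the body `i`. -/
def gradIS {N : ℕ} (m : Fin N → ℝ) (q : Fin N → V4) (i : Fin N) : V4 :=
  (2 * m i) •
    ![q i 0 * (q i 2 ^ 2 + q i 3 ^ 2), q i 1 * (q i 2 ^ 2 + q i 3 ^ 2),
      -(q i 2 * (q i 0 ^ 2 + q i 1 ^ 2)), -(q i 3 * (q i 0 ^ 2 + q i 1 ^ 2))]

/-- Gradient of the moment of inertia `I(q) = Σ mᵢ(xᵢ²+yᵢ²)` on `(H³)^N` at the body `i`. -/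
def gradIH {N : ℕ} (m : Fin N → ℝ) (q : Fin N → V4) (i : Fin N) : V4 :=
  (2 * m i) •
    ![q i 0 * (q i 3 ^ 2 - q i 2 ^ 2), q i 1 * (q i 3 ^ 2 - q i 2 ^ 2),
      q i 2 * (q i 0 ^ 2 + q i 1 ^ 2), q i 3 * (q i 0 ^ 2 + q i 1 ^ 2)]

/-- The action of the rotation `A_{α,β}(t) ∈ SO(4)` on `ℝ⁴`. -/
def rotA (α β t : ℝ) (p : V4) : V4 :=
  ![Real.cos (α * t) * p 0 - Real.sin (α * t) * p 1,
    Real.sin (α * t) * p 0 + Real.cos (α * t) * p 1,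
    Real.cos (β * t) * p 2 - Real.sin (β * t) * p 3,
    Real.sin (β * t) * p 2 + Real.cos (β * t) * p 3]

/-- The action of the transformation `B_{α,β}(t) ∈ SO(3,1)` on `ℝ⁴`. -/
def rotB (α β t : ℝ) (p : V4) : V4 :=
  ![Real.cos (α * t) * p 0 - Real.sin (α * t) * p 1,
    Real.sin (α * t) * p 0 + Real.cos (α * t) * p 1,
    Real.cosh (β * t) * p 2 + Real.sinh (β * t) * p 3,
    Real.sinh (β * t) * p 2 + Real.cosh (β * t) * p 3]

/-- The great circle `S¹_xy`. -/
def S1xy : Set V4 := {p | p 0 ^ 2 + p 1 ^ 2 = 1 ∧ p 2 = 0 ∧ p 3 = 0}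

/-- The great circle `S¹_zw`. -/
def S1zw : Set V4 := {p | p 2 ^ 2 + p 3 ^ 2 = 1 ∧ p 0 = 0 ∧ p 1 = 0}

/-- The geodesic `H¹_zw`. -/
def H1zw : Set V4 := {p | p 3 ^ 2 - p 2 ^ 2 = 1 ∧ 0 < p 3 ∧ p 0 = 0 ∧ p 1 = 0}

/-!
The curve is `q(t) = A(t) q` with `A(t) = exp (t J)` for the generator `J = d/dt A(t)|₀`, so its
velocity is `A(t) J q` and its acceleration `A(t) J² q`. Since `A(t)` is orthogonal, it preserves
dot products and hence mutual distances, so the gradient of `U` is equivariant under it. The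
equations of motion at time `t` are therefore `A(t)` applied to those at time `0`, namely
`mᵢ J² qᵢ + mᵢ |J qᵢ|² qᵢ = ∇_{qᵢ} U(q)`, and on `S³` the left-hand side is the stated
vector.
-/

def rotAGen (α β : ℝ) (p : V4) : V4 := ![-(α * p 1), α * p 0, -(β * p 3), β * p 2]

lemma hasDerivAt_cos_const_mul (γ t : ℝ) :
    HasDerivAt (fun s => cos (γ * s)) (-sin (γ * t) * γ) t := by
  simpa using ((hasDerivAt_id t).const_mul γ).cos

lemma hasDerivAt_sin_const_mul (γ t : ℝ) :
    HasDerivAt (fun s => sin (γ * s)) (cos (γ * t) * γ) t := by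
  simpa using ((hasDerivAt_id t).const_mul γ).sin

lemma hasDerivAt_planeRotation_fst (γ a b t : ℝ) :
    HasDerivAt (fun s => cos (γ * s) * a - sin (γ * s) * b)
      (cos (γ * t) * -(γ * b) - sin (γ * t) * (γ * a)) t :=
  (((hasDerivAt_cos_const_mul γ t).mul_const a).sub
    ((hasDerivAt_sin_const_mul γ t).mul_const b)).congr_deriv (by ring)

lemma hasDerivAt_planeRotation_snd (γ a b t : ℝ) :
    HasDerivAt (fun s => sin (γ * s) * a + cos (γ * s) * b)
      (sin (γ * t) * -(γ * b) + cos (γ * t) * (γ * a)) t :=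
  (((hasDerivAt_sin_const_mul γ t).mul_const a).add
    ((hasDerivAt_cos_const_mul γ t).mul_const b)).congr_deriv (by ring)

lemma hasDerivAt_rotA (α β t : ℝ) (p : V4) :
    HasDerivAt (fun s => rotA α β s p) (rotA α β t (rotAGen α β p)) t := by
  refine hasDerivAt_pi.2 fun i => ?_
  fin_cases i
  · exact hasDerivAt_planeRotation_fst α (p 0) (p 1) t
  · exact hasDerivAt_planeRotation_snd α (p 0) (p 1) t
  · exact hasDerivAt_planeRotation_fst β (p 2) (p 3) t
  · exact hasDerivAt_planeRotation_snd β (p 2) (p 3) t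

lemma deriv_rotA (α β : ℝ) (p : V4) :
    deriv (fun s => rotA α β s p) = fun t => rotA α β t (rotAGen α β p) :=
  funext fun t => (hasDerivAt_rotA α β t p).deriv

def rotALinearMap (α β t : ℝ) : V4 →ₗ[ℝ] V4 where
  toFun := rotA α β t
  map_add' u v := by
    funext i
    fin_cases i <;> simp only [rotA, Pi.add_apply, Fin.zero_eta, Fin.mk_one,
      Fin.reduceFinMk, Fin.isValue, Matrix.cons_val_zero, Matrix.cons_val_one,
      Matrix.cons_val] <;> ring
  map_smul' c u := by
    funext i
    fin_cases i <;> simp only [rotA, Pi.smul_apply, smul_eq_mul, RingHom.id_apply,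
      Fin.zero_eta, Fin.mk_one, Fin.reduceFinMk, Fin.isValue, Matrix.cons_val_zero,
      Matrix.cons_val_one, Matrix.cons_val] <;> ring

lemma rotA_neg_rotA (α β t : ℝ) (p : V4) : rotA α β (-t) (rotA α β t p) = p := by
  funext i
  fin_cases i <;> simp only [rotA, mul_neg, cos_neg, sin_neg, Fin.zero_eta,
    Fin.mk_one, Fin.reduceFinMk, Fin.isValue, Matrix.cons_val_zero, Matrix.cons_val_one,
    Matrix.cons_val]
  · linear_combination p 0 * sin_sq_add_cos_sq (α * t)
  · linear_combination p 1 * sin_sq_add_cos_sq (α * t)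
  · linear_combination p 2 * sin_sq_add_cos_sq (β * t)
  · linear_combination p 3 * sin_sq_add_cos_sq (β * t)

lemma rotA_injective (α β t : ℝ) : Function.Injective (rotA α β t) :=
  Function.LeftInverse.injective (rotA_neg_rotA α β t)

lemma dot4_rotA (α β t : ℝ) (u v : V4) :
    dot4 (rotA α β t u) (rotA α β t v) = dot4 u v := by
  simp only [dot4, rotA, Matrix.cons_val_zero, Matrix.cons_val_one, Matrix.cons_val_two,
    Matrix.cons_val_three, Matrix.head_cons, Matrix.tail_cons]
  linear_combination (u 0 * v 0 + u 1 * v 1) * sin_sq_add_cos_sq (α * t) +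
    (u 2 * v 2 + u 3 * v 3) * sin_sq_add_cos_sq (β * t)

lemma gradUS_rotA {N : ℕ} (m : Fin N → ℝ) (q : Fin N → V4) (i : Fin N) (α β t : ℝ) :
    gradUS m (fun j => rotA α β t (q j)) i = rotA α β t (gradUS m q i) := by
  have hdS : ∀ j, dS (rotA α β t (q i)) (rotA α β t (q j)) = dS (q i) (q j) := fun j => by
    rw [dS, dot4_rotA, dS]
  change _ = rotALinearMap α β t _
  simp only [gradUS, hdS, map_sum, map_smul, map_sub]
  rfl

lemma rotAGen_rotAGen_add_smul (α β : ℝ) {p : V4} (hp : p ∈ sphere3) :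
    rotAGen α β (rotAGen α β p) + dot4 (rotAGen α β p) (rotAGen α β p) • p =
      (β ^ 2 - α ^ 2) •
        ![p 0 * (p 3 ^ 2 + p 2 ^ 2), p 1 * (p 3 ^ 2 + p 2 ^ 2),
          -(p 2 * (p 0 ^ 2 + p 1 ^ 2)), -(p 3 * (p 0 ^ 2 + p 1 ^ 2))] := by
  have hp : p 0 ^ 2 + p 1 ^ 2 + p 2 ^ 2 + p 3 ^ 2 = 1 := hp
  funext i
  fin_cases i <;>
    simp only [rotAGen, dot4, Pi.add_apply, Pi.smul_apply, smul_eq_mul, Fin.zero_eta,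
      Fin.mk_one, Fin.reduceFinMk, Fin.isValue, Matrix.cons_val_zero, Matrix.cons_val_one,
      Matrix.cons_val]
  · linear_combination α ^ 2 * p 0 * hp
  · linear_combination α ^ 2 * p 1 * hp
  · linear_combination β ^ 2 * p 2 * hp
  · linear_combination β ^ 2 * p 3 * hp

lemma rotA_equationsOfMotion_iff {N : ℕ} (m : Fin N → ℝ) (q : Fin N → V4) (α β t : ℝ)
    (i : Fin N) :
    (m i • deriv (deriv (fun s => rotA α β s (q i))) t =
        gradUS m (fun j => rotA α β t (q j)) i -
          (m i * dot4 (deriv (fun s => rotA α β s (q i)) t)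
            (deriv (fun s => rotA α β s (q i)) t)) • rotA α β t (q i)) ↔
      m i • (rotAGen α β (rotAGen α β (q i)) +
        dot4 (rotAGen α β (q i)) (rotAGen α β (q i)) • q i) = gradUS m q i := by
  rw [deriv_rotA, deriv_rotA, gradUS_rotA, dot4_rotA]
  change
    m i • rotALinearMap α β t _ = rotALinearMap α β t _ - _ • rotALinearMap α β t _ ↔ _
  rw [← map_smul, ← map_smul, ← map_sub,
    Function.Injective.eq_iff (f := rotALinearMap α β t) (rotA_injective α β t),
    smul_add, smul_smul, eq_sub_iff_add_eq]

theorem statement0_general (N : ℕ) (m : Fin N → ℝ)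
    (q : Fin N → V4) (hq : ∀ i, q i ∈ sphere3) (α β : ℝ) :
    (∀ (t : ℝ) (i : Fin N),
      m i • deriv (deriv (fun s => rotA α β s (q i))) t =
        gradUS m (fun j => rotA α β t (q j)) i -
          (m i * dot4 (deriv (fun s => rotA α β s (q i)) t)
            (deriv (fun s => rotA α β s (q i)) t)) • rotA α β t (q i)) ↔
    (∀ i : Fin N,
      (m i * (β ^ 2 - α ^ 2)) •
        ![q i 0 * (q i 3 ^ 2 + q i 2 ^ 2), q i 1 * (q i 3 ^ 2 + q i 2 ^ 2),
          -(q i 2 * (q i 0 ^ 2 + q i 1 ^ 2)), -(q i 3 * (q i 0 ^ 2 + q i 1 ^ 2))] =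
        gradUS m q i) := by
  simp only [rotA_equationsOfMotion_iff, rotAGen_rotAGen_add_smul α β (hq _), smul_smul,
    forall_const]

/-- A rotated curve `A_{α,β}(t)q` is a solution of the equations of motion
in `S³` iff `q` satisfies the relative-equilibrium criterion. -/
theorem statement0 (N : ℕ) (hN : 2 ≤ N) (m : Fin N → ℝ) (hm : ∀ i, 0 < m i)
    (q : Fin N → V4) (hq : ∀ i, q i ∈ sphere3)
    (hns : ∀ i j, i ≠ j → q i ≠ q j ∧ q i ≠ -q j) (α β : ℝ) :
    (∀ (t : ℝ) (i : Fin N),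
      m i • deriv (deriv (fun s => rotA α β s (q i))) t =
        gradUS m (fun j => rotA α β t (q j)) i -
          (m i * dot4 (deriv (fun s => rotA α β s (q i)) t)
            (deriv (fun s => rotA α β s (q i)) t)) • rotA α β t (q i)) ↔
    (∀ i : Fin N,
      (m i * (β ^ 2 - α ^ 2)) •
        ![q i 0 * (q i 3 ^ 2 + q i 2 ^ 2), q i 1 * (q i 3 ^ 2 + q i 2 ^ 2),
          -(q i 2 * (q i 0 ^ 2 + q i 1 ^ 2)), -(q i 3 * (q i 0 ^ 2 + q i 1 ^ 2))] =
        gradUS m q i) :=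
  statement0_general N m q hq α β
end
end

section
/- Let N ≥ 2, let m₁,…,m_N > 0, and let q = (q₁,…,q_N) be a nonsingular configuration in H³ with qᵢ = (xᵢ,yᵢ,zᵢ,wᵢ). For α,β ∈ ℝ let B_{α,β}(t) be the 4×4 block-diagonal matrix with upper block [[cos αt, −sin αt],[sin αt, cos αt]] acting on (x,y) and lower block [[cosh βt, sinh βt],[sinh βt, cosh βt]] acting on (z,w). Then the curve t ↦ (B_{α,β}(t)q₁,…,B_{α,β}(t)q_N) satisfies, for all t ∈ ℝ and all i, the equations of motion mᵢ q̈ᵢ(t) = ∇_{qᵢ}U(q(t)) + mᵢ (q̇ᵢ(t)⊙q̇ᵢ(t)) qᵢ(t), if and only if for every i one has −mᵢ(α² + β²)·(xᵢ(wᵢ²−zᵢ²), yᵢ(wᵢ²−zᵢ²), zᵢ(xᵢ²+yᵢ²), wᵢ(xᵢ²+yᵢ²)) = ∇_{qᵢ}U(q). -/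
noncomputable section
open Real Finset

/-! `B_{α,β}(t)` is a one-parameter group of Lorentz transformations with generator
`K = rotBGen α β`, so `q̇ = B(t)Kq` and `q̈ = B(t)K²q`, while `U` and `⊙` are `B(t)`-invariant.
Hence the equations of motion at time `t` are the image under `B(t)` of those at time `0`,
which on `H³` reduce to the criterion. -/

def rotBGen (α β : ℝ) (p : V4) : V4 := ![-(α * p 1), α * p 0, β * p 3, β * p 2]

lemma rotB_add (α β t : ℝ) (p r : V4) :
    rotB α β t (p + r) = rotB α β t p + rotB α β t r := by
  funext k; fin_cases k <;> simp [rotB] <;> ring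

lemma rotB_smul (α β t c : ℝ) (p : V4) :
    rotB α β t (c • p) = c • rotB α β t p := by
  funext k; fin_cases k <;> simp [rotB] <;> ring

def rotBLinear (α β t : ℝ) : V4 →ₗ[ℝ] V4 where
  toFun := rotB α β t
  map_add' := rotB_add α β t
  map_smul' := rotB_smul α β t

lemma rotB_zero (α β : ℝ) (p : V4) : rotB α β 0 p = p := by
  funext k; fin_cases k <;> simp [rotB]

lemma rotB_rotB (α β s t : ℝ) (p : V4) : rotB α β s (rotB α β t p) = rotB α β (s + t) p := by
  funext k
  fin_cases k <;> simp [rotB, mul_add, cos_add, sin_add, cosh_add, sinh_add] <;> ring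

lemma rotB_injective (α β t : ℝ) : Function.Injective (rotB α β t) := fun p r h => by
  rw [← rotB_zero α β p, ← rotB_zero α β r, ← neg_add_cancel t, ← rotB_rotB, ← rotB_rotB, h]

lemma mdot4_rotB (α β t : ℝ) (p r : V4) :
    mdot4 (rotB α β t p) (rotB α β t r) = mdot4 p r := by
  simp only [rotB, mdot4, Matrix.cons_val_zero, Matrix.cons_val_one, Matrix.cons_val_two,
    Matrix.cons_val_three, Matrix.head_cons, Matrix.tail_cons]
  linear_combination (p 0 * r 0 + p 1 * r 1) * sin_sq_add_cos_sq (α * t)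
    + (p 2 * r 2 - p 3 * r 3) * cosh_sq_sub_sinh_sq (β * t)

lemma dH_rotB (α β t : ℝ) (p r : V4) : dH (rotB α β t p) (rotB α β t r) = dH p r := by
  rw [dH, mdot4_rotB, dH]

lemma gradUH_rotB {N : ℕ} (m : Fin N → ℝ) (q : Fin N → V4) (α β t : ℝ) (i : Fin N) :
    gradUH m (fun j => rotB α β t (q j)) i = rotB α β t (gradUH m q i) := by
  change _ = rotBLinear α β t _
  simp only [gradUH, dH_rotB, map_sum, map_smul, map_sub]
  rfl

lemma hasDerivAt_rotB (α β : ℝ) (p : V4) (t : ℝ) :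
    HasDerivAt (fun s => rotB α β s p) (rotB α β t (rotBGen α β p)) t := by
  have hlin (c : ℝ) : HasDerivAt (fun s : ℝ => c * s) c t := by
    simpa using (hasDerivAt_id t).const_mul c
  have hcos := (hasDerivAt_cos (α * t)).comp t (hlin α)
  have hsin := (hasDerivAt_sin (α * t)).comp t (hlin α)
  have hcosh := (hasDerivAt_cosh (β * t)).comp t (hlin β)
  have hsinh := (hasDerivAt_sinh (β * t)).comp t (hlin β)
  rw [hasDerivAt_pi]
  intro k
  fin_cases k
  · exact ((hcos.mul_const (p 0)).sub (hsin.mul_const (p 1))).congr_deriv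
      (by simp [rotB, rotBGen]; ring)
  · exact ((hsin.mul_const (p 0)).add (hcos.mul_const (p 1))).congr_deriv
      (by simp [rotB, rotBGen]; ring)
  · exact ((hcosh.mul_const (p 2)).add (hsinh.mul_const (p 3))).congr_deriv
      (by simp [rotB, rotBGen]; ring)
  · exact ((hsinh.mul_const (p 2)).add (hcosh.mul_const (p 3))).congr_deriv
      (by simp [rotB, rotBGen]; ring)

lemma deriv_rotB (α β : ℝ) (p : V4) :
    deriv (fun s => rotB α β s p) = fun t => rotB α β t (rotBGen α β p) :=
  funext fun t => (hasDerivAt_rotB α β p t).deriv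

lemma deriv_deriv_rotB (α β : ℝ) (p : V4) (t : ℝ) :
    deriv (deriv (fun s => rotB α β s p)) t = rotB α β t (rotBGen α β (rotBGen α β p)) := by
  rw [deriv_rotB, deriv_rotB]

lemma equationOfMotion_rotB_iff {N : ℕ} (m : Fin N → ℝ) (q : Fin N → V4) (α β t : ℝ)
    (i : Fin N) :
    m i • deriv (deriv (fun s => rotB α β s (q i))) t =
        gradUH m (fun j => rotB α β t (q j)) i +
          (m i * mdot4 (deriv (fun s => rotB α β s (q i)) t)
            (deriv (fun s => rotB α β s (q i)) t)) • rotB α β t (q i) ↔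
      m i • rotBGen α β (rotBGen α β (q i)) =
        gradUH m q i + (m i * mdot4 (rotBGen α β (q i)) (rotBGen α β (q i))) • q i := by
  rw [deriv_deriv_rotB, deriv_rotB, gradUH_rotB, mdot4_rotB, ← rotB_smul, ← rotB_smul,
    ← rotB_add]
  exact (rotB_injective α β t).eq_iff

lemma mdot4_self_of_mem_hyper3 {p : V4} (hp : p ∈ hyper3) : mdot4 p p = -1 := by
  rw [← hp.1, mdot4]
  ring

lemma rotBGen_rotBGen_sub_mdot4_smul (α β : ℝ) {p : V4} (hp : mdot4 p p = -1) :
    rotBGen α β (rotBGen α β p) - mdot4 (rotBGen α β p) (rotBGen α β p) • p =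
      (-(α ^ 2 + β ^ 2)) • ![p 0 * (p 3 ^ 2 - p 2 ^ 2), p 1 * (p 3 ^ 2 - p 2 ^ 2),
        p 2 * (p 0 ^ 2 + p 1 ^ 2), p 3 * (p 0 ^ 2 + p 1 ^ 2)] := by
  simp only [mdot4] at hp
  funext k
  fin_cases k <;> simp [rotBGen, mdot4]
  · linear_combination -(α ^ 2 * p 0) * hp
  · linear_combination -(α ^ 2 * p 1) * hp
  · linear_combination β ^ 2 * p 2 * hp
  · linear_combination β ^ 2 * p 3 * hp

theorem statement1_general (N : ℕ) (m : Fin N → ℝ)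
    (q : Fin N → V4) (hq : ∀ i, q i ∈ hyper3)
    (α β : ℝ) :
    (∀ (t : ℝ) (i : Fin N),
      m i • deriv (deriv (fun s => rotB α β s (q i))) t =
        gradUH m (fun j => rotB α β t (q j)) i +
          (m i * mdot4 (deriv (fun s => rotB α β s (q i)) t)
            (deriv (fun s => rotB α β s (q i)) t)) • rotB α β t (q i)) ↔
    (∀ i : Fin N,
      (-(m i * (α ^ 2 + β ^ 2))) •
        ![q i 0 * (q i 3 ^ 2 - q i 2 ^ 2), q i 1 * (q i 3 ^ 2 - q i 2 ^ 2),
          q i 2 * (q i 0 ^ 2 + q i 1 ^ 2), q i 3 * (q i 0 ^ 2 + q i 1 ^ 2)] =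
        gradUH m q i) := by
  have at_time_zero (i : Fin N) :
      m i • rotBGen α β (rotBGen α β (q i)) =
          gradUH m q i + (m i * mdot4 (rotBGen α β (q i)) (rotBGen α β (q i))) • q i ↔
        (-(m i * (α ^ 2 + β ^ 2))) •
          ![q i 0 * (q i 3 ^ 2 - q i 2 ^ 2), q i 1 * (q i 3 ^ 2 - q i 2 ^ 2),
            q i 2 * (q i 0 ^ 2 + q i 1 ^ 2), q i 3 * (q i 0 ^ 2 + q i 1 ^ 2)] =
          gradUH m q i := by
    rw [← sub_eq_iff_eq_add, mul_smul, ← smul_sub,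
      rotBGen_rotBGen_sub_mdot4_smul α β (mdot4_self_of_mem_hyper3 (hq i)), smul_smul,
      mul_neg, eq_comm]
  simp only [equationOfMotion_rotB_iff, at_time_zero]
  exact ⟨fun h => h 0, fun h _ => h⟩

/-- A transformed curve `B_{α,β}(t)q` is a solution of the equations of motion
in `H³` iff `q` satisfies the relative-equilibrium criterion. -/
theorem statement1 (N : ℕ) (hN : 2 ≤ N) (m : Fin N → ℝ) (hm : ∀ i, 0 < m i)
    (q : Fin N → V4) (hq : ∀ i, q i ∈ hyper3)
    (hns : ∀ i j, i ≠ j → q i ≠ q j) (α β : ℝ) :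
    (∀ (t : ℝ) (i : Fin N),
      m i • deriv (deriv (fun s => rotB α β s (q i))) t =
        gradUH m (fun j => rotB α β t (q j)) i +
          (m i * mdot4 (deriv (fun s => rotB α β s (q i)) t)
            (deriv (fun s => rotB α β s (q i)) t)) • rotB α β t (q i)) ↔
    (∀ i : Fin N,
      (-(m i * (α ^ 2 + β ^ 2))) •
        ![q i 0 * (q i 3 ^ 2 - q i 2 ^ 2), q i 1 * (q i 3 ^ 2 - q i 2 ^ 2),
          q i 2 * (q i 0 ^ 2 + q i 1 ^ 2), q i 3 * (q i 0 ^ 2 + q i 1 ^ 2)] =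
        gradUH m q i) :=
  statement1_general N m q hq α β
end
end

section
/- Let σ ∈ {1,−1} and let M³ = {(x,y,z,w) ∈ ℝ⁴ : x²+y²+z²+σw² = σ, with w > 0 if σ = −1}. Let a,b,c,d ∈ ℝ and suppose the set S = {(x,y,z,w) ∈ M³ : ax+by+cz+dw = 0} is nonempty and every (x,y,z,w) ∈ S satisfies (ax+by)(w²+σz²) = (cz+dw)(x²+y²). Then (a,b) = (0,0) or (c,d) = (0,0). -/
noncomputable section
open Real Finset

/-!
Substituting `ax + by = -(cz + dw)` into the tangency identity shows that `cz + dw` vanishes on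
the section `S`. Up to positive scaling, `S` is a nonempty open subset of the hyperplane
`ax + by + cz + dw = 0`, so `cz + dw` vanishes on the whole hyperplane. But if `(a, b) ≠ 0` and
`(c, d) ≠ 0`, the hyperplane contains `(-(c² + d²) a, -(c² + d²) b, (a² + b²) c, (a² + b²) d)`,
where `cz + dw = (a² + b²)(c² + d²) ≠ 0`.
-/

open Filter Topology

def quadσ (σ : ℝ) (p : V4) : ℝ := p 0 ^ 2 + p 1 ^ 2 + p 2 ^ 2 + σ * p 3 ^ 2

def M3 (σ : ℝ) : Set V4 := {p | quadσ σ p = σ ∧ (σ = -1 → 0 < p 3)}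

lemma quadσ_smul (σ t : ℝ) (p : V4) : quadσ σ (t • p) = t ^ 2 * quadσ σ p := by
  simp only [quadσ, Pi.smul_apply, smul_eq_mul]
  ring

lemma exists_smul_mem_M3 {σ : ℝ} {p : V4} (hp : 0 < σ * quadσ σ p)
    (hw : σ = -1 → 0 < p 3) : ∃ t : ℝ, t ≠ 0 ∧ t • p ∈ M3 σ := by
  have hQ : quadσ σ p ≠ 0 := by
    rintro hQ
    simp [hQ] at hp
  have hratio : 0 < σ / quadσ σ p := by
    rw [← mul_div_mul_right σ _ hQ, ← sq]
    positivity
  set t := √(σ / quadσ σ p)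
  have ht : 0 < t := Real.sqrt_pos.2 hratio
  refine ⟨t, ht.ne', ?_, fun hσ => mul_pos ht (hw hσ)⟩
  rw [quadσ_smul, Real.sq_sqrt hratio.le, div_mul_cancel₀ _ hQ]

/-- `p₀ + ε • q` stays in the open cone `{σ · quadσ σ > 0}` (and in `w > 0`) for small `ε`, and
points of that cone rescale into `M³`. -/
lemma exists_smul_add_smul_mem_M3 {σ : ℝ} (hσ : σ ≠ 0) {p₀ : V4} (hp₀ : p₀ ∈ M3 σ) (q : V4) :
    ∃ ε t : ℝ, ε ≠ 0 ∧ t ≠ 0 ∧ t • (p₀ + ε • q) ∈ M3 σ := by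
  have hquad : ∀ᶠ ε in 𝓝 (0 : ℝ), 0 < σ * quadσ σ (p₀ + ε • q) := by
    have hcont : Continuous fun ε : ℝ => σ * quadσ σ (p₀ + ε • q) := by
      simp only [quadσ, Pi.add_apply, Pi.smul_apply, smul_eq_mul]
      fun_prop
    refine hcont.continuousAt.eventually (lt_mem_nhds ?_)
    simpa [hp₀.1] using mul_self_pos.2 hσ
  have hw : ∀ᶠ ε in 𝓝 (0 : ℝ), σ = -1 → 0 < (p₀ + ε • q) 3 := by
    refine eventually_imp_distrib_left.2 fun hσ => ?_
    have hcont : Continuous fun ε : ℝ => (p₀ + ε • q) 3 := by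
      simp only [Pi.add_apply, Pi.smul_apply, smul_eq_mul]
      fun_prop
    refine hcont.continuousAt.eventually (lt_mem_nhds ?_)
    simpa using hp₀.2 hσ
  obtain ⟨ε, ⟨hεquad, hεw⟩, hε⟩ :=
    (((hquad.and hw).filter_mono nhdsWithin_le_nhds).and
      (self_mem_nhdsWithin : ∀ᶠ ε in 𝓝[≠] (0 : ℝ), ε ≠ 0)).exists
  obtain ⟨t, ht, hmem⟩ := exists_smul_mem_M3 hεquad hεw
  exact ⟨ε, t, hε, ht, hmem⟩

lemma LinearMap.eq_zero_on_hyperplane_of_M3 {σ : ℝ} (hσ : σ ≠ 0) {ℓ m : V4 →ₗ[ℝ] ℝ}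
    (hS : ∀ p ∈ M3 σ, ℓ p = 0 → m p = 0) {p₀ : V4} (hp₀ : p₀ ∈ M3 σ) (hℓp₀ : ℓ p₀ = 0)
    {q : V4} (hℓq : ℓ q = 0) : m q = 0 := by
  obtain ⟨ε, t, hε, ht, hmem⟩ := exists_smul_add_smul_mem_M3 hσ hp₀ q
  have hm := hS _ hmem (by simp [hℓp₀, hℓq])
  simpa [hS p₀ hp₀ hℓp₀, hε, ht] using hm

/-- The tangency identity reduces to `(cz + dw)(x² + y² + w² + σz²) = 0`, and on `M³` the second
factor is `1 + (1 - σ)(x² + y²) ≥ 1`. -/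
lemma cz_add_dw_eq_zero_of_tangent {σ a b c d : ℝ} (hσ : σ ^ 2 = 1) {p : V4} (hp : quadσ σ p = σ)
    (hplane : a * p 0 + b * p 1 + c * p 2 + d * p 3 = 0)
    (htan : (a * p 0 + b * p 1) * (p 3 ^ 2 + σ * p 2 ^ 2) =
      (c * p 2 + d * p 3) * (p 0 ^ 2 + p 1 ^ 2)) :
    c * p 2 + d * p 3 = 0 := by
  have hfactor :
      p 0 ^ 2 + p 1 ^ 2 + p 3 ^ 2 + σ * p 2 ^ 2 = 1 + (1 - σ) * (p 0 ^ 2 + p 1 ^ 2) := by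
    unfold quadσ at hp
    linear_combination σ * hp - (p 3 ^ 2 - 1) * hσ
  have hσle : σ ≤ 1 := by nlinarith
  have hprod : (c * p 2 + d * p 3) * (1 + (1 - σ) * (p 0 ^ 2 + p 1 ^ 2)) = 0 := by
    linear_combination (p 3 ^ 2 + σ * p 2 ^ 2) * hplane - htan - (c * p 2 + d * p 3) * hfactor
  refine (mul_eq_zero.1 hprod).resolve_right (ne_of_gt ?_)
  have : 0 ≤ (1 - σ) * (p 0 ^ 2 + p 1 ^ 2) := by
    apply mul_nonneg <;> [linarith; positivity]
  linarith

/-- If the gradient of `x²+y²` is everywhere tangent to the hyperplane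
section `{ax+by+cz+dw = 0}` of `M³`, then `(a,b) = 0` or `(c,d) = 0`. -/
theorem statement5 (σ : ℝ) (hσ : σ = 1 ∨ σ = -1) (a b c d : ℝ)
    (hne : ∃ p : V4, (p 0 ^ 2 + p 1 ^ 2 + p 2 ^ 2 + σ * p 3 ^ 2 = σ ∧ (σ = -1 → 0 < p 3)) ∧
      a * p 0 + b * p 1 + c * p 2 + d * p 3 = 0)
    (h : ∀ p : V4, (p 0 ^ 2 + p 1 ^ 2 + p 2 ^ 2 + σ * p 3 ^ 2 = σ ∧ (σ = -1 → 0 < p 3)) →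
      a * p 0 + b * p 1 + c * p 2 + d * p 3 = 0 →
      (a * p 0 + b * p 1) * (p 3 ^ 2 + σ * p 2 ^ 2) =
        (c * p 2 + d * p 3) * (p 0 ^ 2 + p 1 ^ 2)) :
    (a = 0 ∧ b = 0) ∨ (c = 0 ∧ d = 0) := by
  have hσsq : σ ^ 2 = 1 := by rcases hσ with rfl | rfl <;> norm_num
  let ℓ : V4 →ₗ[ℝ] ℝ :=
    a • LinearMap.proj 0 + b • LinearMap.proj 1 + c • LinearMap.proj 2 + d • LinearMap.proj 3
  let m : V4 →ₗ[ℝ] ℝ := c • LinearMap.proj 2 + d • LinearMap.proj 3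
  have hℓ (p : V4) : ℓ p = a * p 0 + b * p 1 + c * p 2 + d * p 3 := by simp [ℓ]
  have hm (p : V4) : m p = c * p 2 + d * p 3 := by simp [m]
  obtain ⟨p₀, hp₀, hℓp₀⟩ := hne
  have hS : ∀ p ∈ M3 σ, ℓ p = 0 → m p = 0 := fun p hp hℓp => by
    rw [hℓ] at hℓp
    exact (hm p).trans (cz_add_dw_eq_zero_of_tangent hσsq hp.1 hℓp (h p hp hℓp))
  let q : V4 := ![-(c * c + d * d) * a, -(c * c + d * d) * b, (a * a + b * b) * c,
    (a * a + b * b) * d]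
  have hℓq : ℓ q = 0 := by
    rw [hℓ]
    simp only [q, Matrix.cons_val]
    ring
  have hσ0 : σ ≠ 0 := by
    rintro rfl
    norm_num at hσsq
  have hmq := LinearMap.eq_zero_on_hyperplane_of_M3 hσ0 hS hp₀ ((hℓ p₀).trans hℓp₀) hℓq
  have hprod : (a * a + b * b) * (c * c + d * d) = 0 := by
    rw [hm] at hmq
    simp only [q, Matrix.cons_val] at hmq
    linear_combination hmq
  simpa only [mul_eq_zero, mul_self_add_mul_self_eq_zero] using hprod
end
end

section
/- Let N ≥ 2, m₁,…,m_N > 0, and let q = (q₁,…,q_N) be a nonsingular configuration in S³. Then there exists λ ∈ ℝ with ∇_{qᵢ}U(q) = λ∇_{qᵢ}I(q) for all i if and only if the following hold: (a) for every i with qᵢ ∈ S¹_xy ∪ S¹_zw, ∇_{qᵢ}U(q) = 0; and (b) there exists λ ∈ ℝ such that for every i with qᵢ ∉ S¹_xy ∪ S¹_zw one has Σ_{j≠i} mⱼ(xᵢxⱼ + yᵢyⱼ − rᵢ² cos d_ij)/sin³ d_ij = 2λ rᵢ²ρᵢ², Σ_{j≠i} mⱼ(xᵢyⱼ − xⱼyᵢ)/sin³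 d_ij = 0, and Σ_{j≠i} mⱼ(zᵢwⱼ − zⱼwᵢ)/sin³ d_ij = 0. -/
/-!
Both gradients are tangent to `S³` at `qᵢ` (for `∇U` because `cos d_ij = qᵢ·qⱼ`), and on `S³` the
vector `∇_{qᵢ}I` vanishes exactly on `S¹_xy ∪ S¹_zw`. Off these circles a tangent vector `v` at
`p = (x,y,z,w)` is a multiple `c (xρ², yρ², −zr², −wr²)` of `∇I` iff `xv₀ + yv₁ = c r²ρ²`,
`xv₁ − yv₀ = 0` and `zv₃ − wv₂ = 0`; for `v = ∇_{qᵢ}U` these three quantities are `mᵢ` times the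
sums in (b).
-/

noncomputable section
open Real Finset

def inertiaDir (p : V4) : V4 :=
  ![p 0 * (p 2 ^ 2 + p 3 ^ 2), p 1 * (p 2 ^ 2 + p 3 ^ 2),
    -(p 2 * (p 0 ^ 2 + p 1 ^ 2)), -(p 3 * (p 0 ^ 2 + p 1 ^ 2))]

theorem gradIS_eq_smul_inertiaDir {N : ℕ} (m : Fin N → ℝ) (q : Fin N → V4) (i : Fin N) :
    gradIS m q i = (2 * m i) • inertiaDir (q i) :=
  rfl

theorem inertiaDir_eq_zero_of_mem {p : V4} (hp : p ∈ S1xy ∪ S1zw) : inertiaDir p = 0 := by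
  rcases hp with ⟨-, hz, hw⟩ | ⟨-, hx, hy⟩ <;>
    ext k <;> fin_cases k <;> simp [inertiaDir, *]

theorem mem_S1zw_of_sq_add_sq_eq_zero {p : V4} (hp : p ∈ sphere3) (h : p 0 ^ 2 + p 1 ^ 2 = 0) :
    p ∈ S1zw := by
  have hp : p 0 ^ 2 + p 1 ^ 2 + p 2 ^ 2 + p 3 ^ 2 = 1 := hp
  refine ⟨by linarith, ?_, ?_⟩ <;> nlinarith [sq_nonneg (p 0), sq_nonneg (p 1)]

theorem mem_S1xy_of_sq_add_sq_eq_zero {p : V4} (hp : p ∈ sphere3) (h : p 2 ^ 2 + p 3 ^ 2 = 0) :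
    p ∈ S1xy := by
  have hp : p 0 ^ 2 + p 1 ^ 2 + p 2 ^ 2 + p 3 ^ 2 = 1 := hp
  refine ⟨by linarith, ?_, ?_⟩ <;> nlinarith [sq_nonneg (p 2), sq_nonneg (p 3)]

/-- The three scalar conditions only see the `zw`-components of `v` through `zv₃ − wv₂`; the
tangency `p·v = 0` supplies the missing one. -/
theorem eq_smul_inertiaDir_iff {p v : V4} (c : ℝ) (hxy : p 0 ^ 2 + p 1 ^ 2 ≠ 0)
    (hzw : p 2 ^ 2 + p 3 ^ 2 ≠ 0) (horth : dot4 p v = 0) :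
    v = c • inertiaDir p ↔
      p 0 * v 0 + p 1 * v 1 = c * ((p 0 ^ 2 + p 1 ^ 2) * (p 2 ^ 2 + p 3 ^ 2)) ∧
        p 0 * v 1 - p 1 * v 0 = 0 ∧ p 2 * v 3 - p 3 * v 2 = 0 := by
  unfold dot4 at horth
  constructor
  · rintro rfl
    simp only [inertiaDir, Pi.smul_apply, smul_eq_mul, Matrix.cons_val]
    refine ⟨by ring, by ring, by ring⟩
  · rintro ⟨hdot, hxy_cross, hzw_cross⟩
    have h0 : v 0 = c * (p 0 * (p 2 ^ 2 + p 3 ^ 2)) := mul_left_cancel₀ hxy <| by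
      linear_combination p 0 * hdot - p 1 * hxy_cross
    have h1 : v 1 = c * (p 1 * (p 2 ^ 2 + p 3 ^ 2)) := mul_left_cancel₀ hxy <| by
      linear_combination p 1 * hdot + p 0 * hxy_cross
    have h2 : v 2 = c * -(p 2 * (p 0 ^ 2 + p 1 ^ 2)) := mul_left_cancel₀ hzw <| by
      linear_combination p 2 * horth - p 2 * hdot - p 3 * hzw_cross
    have h3 : v 3 = c * -(p 3 * (p 0 ^ 2 + p 1 ^ 2)) := mul_left_cancel₀ hzw <| by
      linear_combination p 3 * horth - p 3 * hdot + p 2 * hzw_cross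
    ext k
    fin_cases k <;> simp [inertiaDir, h0, h1, h2, h3]

theorem cos_dS_of_mem_sphere3 {p r : V4} (hp : p ∈ sphere3) (hr : r ∈ sphere3) :
    Real.cos (dS p r) = dot4 p r := by
  have hp : p 0 ^ 2 + p 1 ^ 2 + p 2 ^ 2 + p 3 ^ 2 = 1 := hp
  have hr : r 0 ^ 2 + r 1 ^ 2 + r 2 ^ 2 + r 3 ^ 2 = 1 := hr
  unfold dS dot4
  apply Real.cos_arccos
  · nlinarith [sq_nonneg (p 0 + r 0), sq_nonneg (p 1 + r 1), sq_nonneg (p 2 + r 2),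
      sq_nonneg (p 3 + r 3)]
  · nlinarith [sq_nonneg (p 0 - r 0), sq_nonneg (p 1 - r 1), sq_nonneg (p 2 - r 2),
      sq_nonneg (p 3 - r 3)]

section gradUS

variable {N : ℕ} {m : Fin N → ℝ} {q : Fin N → V4} (i : Fin N)

theorem gradUS_apply (k : Fin 4) :
    gradUS m q i k = ∑ j ∈ univ.erase i,
      m i * m j / Real.sin (dS (q i) (q j)) ^ 3 * (q j k - Real.cos (dS (q i) (q j)) * q i k) := by
  simp [gradUS, Finset.sum_apply]

theorem dot4_gradUS_eq_zero (hq : ∀ j, q j ∈ sphere3) : dot4 (q i) (gradUS m q i) = 0 := by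
  have hqi : q i 0 ^ 2 + q i 1 ^ 2 + q i 2 ^ 2 + q i 3 ^ 2 = 1 := hq i
  simp only [dot4, gradUS_apply, Finset.mul_sum, ← Finset.sum_add_distrib]
  refine Finset.sum_eq_zero fun j _ => ?_
  rw [cos_dS_of_mem_sphere3 (hq i) (hq j), dot4]
  linear_combination -(m i * m j / Real.sin (dS (q i) (q j)) ^ 3 *
    (q i 0 * q j 0 + q i 1 * q j 1 + q i 2 * q j 2 + q i 3 * q j 3)) * hqi

theorem xy_dot_gradUS :
    q i 0 * gradUS m q i 0 + q i 1 * gradUS m q i 1 =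
      m i * ∑ j ∈ univ.erase i,
        m j * (q i 0 * q j 0 + q i 1 * q j 1 - (q i 0 ^ 2 + q i 1 ^ 2) * Real.cos (dS (q i) (q j))) /
          Real.sin (dS (q i) (q j)) ^ 3 := by
  simp only [gradUS_apply, Finset.mul_sum, ← Finset.sum_add_distrib]
  exact Finset.sum_congr rfl fun j _ => by ring

theorem xy_cross_gradUS :
    q i 0 * gradUS m q i 1 - q i 1 * gradUS m q i 0 =
      m i * ∑ j ∈ univ.erase i,
        m j * (q i 0 * q j 1 - q j 0 * q i 1) / Real.sin (dS (q i) (q j)) ^ 3 := by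
  simp only [gradUS_apply, Finset.mul_sum, ← Finset.sum_sub_distrib]
  exact Finset.sum_congr rfl fun j _ => by ring

theorem zw_cross_gradUS :
    q i 2 * gradUS m q i 3 - q i 3 * gradUS m q i 2 =
      m i * ∑ j ∈ univ.erase i,
        m j * (q i 2 * q j 3 - q j 2 * q i 3) / Real.sin (dS (q i) (q j)) ^ 3 := by
  simp only [gradUS_apply, Finset.mul_sum, ← Finset.sum_sub_distrib]
  exact Finset.sum_congr rfl fun j _ => by ring

theorem gradUS_eq_smul_gradIS_iff_of_not_mem (hm : m i ≠ 0) (hq : ∀ j, q j ∈ sphere3)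
    (hi : q i ∉ S1xy ∪ S1zw) (lam : ℝ) :
    gradUS m q i = lam • gradIS m q i ↔
      (∑ j ∈ univ.erase i,
          m j * (q i 0 * q j 0 + q i 1 * q j 1 -
            (q i 0 ^ 2 + q i 1 ^ 2) * Real.cos (dS (q i) (q j))) / Real.sin (dS (q i) (q j)) ^ 3 =
        2 * lam * (q i 0 ^ 2 + q i 1 ^ 2) * (q i 2 ^ 2 + q i 3 ^ 2)) ∧
      (∑ j ∈ univ.erase i,
          m j * (q i 0 * q j 1 - q j 0 * q i 1) / Real.sin (dS (q i) (q j)) ^ 3 = 0) ∧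
      (∑ j ∈ univ.erase i,
          m j * (q i 2 * q j 3 - q j 2 * q i 3) / Real.sin (dS (q i) (q j)) ^ 3 = 0) := by
  have hxy : q i 0 ^ 2 + q i 1 ^ 2 ≠ 0 := fun h =>
    hi (Or.inr (mem_S1zw_of_sq_add_sq_eq_zero (hq i) h))
  have hzw : q i 2 ^ 2 + q i 3 ^ 2 ≠ 0 := fun h =>
    hi (Or.inl (mem_S1xy_of_sq_add_sq_eq_zero (hq i) h))
  rw [gradIS_eq_smul_inertiaDir, smul_smul,
    eq_smul_inertiaDir_iff _ hxy hzw (dot4_gradUS_eq_zero i hq),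
    xy_dot_gradUS, xy_cross_gradUS, zw_cross_gradUS, mul_eq_zero, mul_eq_zero,
    or_iff_right hm, or_iff_right hm]
  refine and_congr ?_ Iff.rfl
  rw [show lam * (2 * m i) * ((q i 0 ^ 2 + q i 1 ^ 2) * (q i 2 ^ 2 + q i 3 ^ 2)) =
      m i * (2 * lam * (q i 0 ^ 2 + q i 1 ^ 2) * (q i 2 ^ 2 + q i 3 ^ 2)) by ring]
  exact mul_right_inj' hm

end gradUS

theorem statement6_general (N : ℕ) (m : Fin N → ℝ) (hm : ∀ i, 0 < m i)
    (q : Fin N → V4) (hq : ∀ i, q i ∈ sphere3) :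
    (∃ lam : ℝ, ∀ i, gradUS m q i = lam • gradIS m q i) ↔
    ((∀ i, q i ∈ S1xy ∪ S1zw → gradUS m q i = 0) ∧
      ∃ lam : ℝ, ∀ i, q i ∉ S1xy ∪ S1zw →
        (∑ j ∈ Finset.univ.erase i,
            m j * (q i 0 * q j 0 + q i 1 * q j 1 -
              (q i 0 ^ 2 + q i 1 ^ 2) * Real.cos (dS (q i) (q j))) /
            (Real.sin (dS (q i) (q j))) ^ 3 =
          2 * lam * (q i 0 ^ 2 + q i 1 ^ 2) * (q i 2 ^ 2 + q i 3 ^ 2)) ∧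
        (∑ j ∈ Finset.univ.erase i,
            m j * (q i 0 * q j 1 - q j 0 * q i 1) / (Real.sin (dS (q i) (q j))) ^ 3 = 0) ∧
        (∑ j ∈ Finset.univ.erase i,
            m j * (q i 2 * q j 3 - q j 2 * q i 3) / (Real.sin (dS (q i) (q j))) ^ 3 = 0)) := by
  have gradIS_eq_zero : ∀ i, q i ∈ S1xy ∪ S1zw → gradIS m q i = 0 := fun i hi => by
    rw [gradIS_eq_smul_inertiaDir, inertiaDir_eq_zero_of_mem hi, smul_zero]
  constructor
  · rintro ⟨lam, hlam⟩
    refine ⟨fun i hi => ?_, lam, fun i hi => ?_⟩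
    · rw [hlam i, gradIS_eq_zero i hi, smul_zero]
    · exact (gradUS_eq_smul_gradIS_iff_of_not_mem i (hm i).ne' hq hi lam).1 (hlam i)
  · rintro ⟨hcirc, lam, hoff⟩
    refine ⟨lam, fun i => ?_⟩
    by_cases hi : q i ∈ S1xy ∪ S1zw
    · rw [hcirc i hi, gradIS_eq_zero i hi, smul_zero]
    · exact (gradUS_eq_smul_gradIS_iff_of_not_mem i (hm i).ne' hq hi lam).2 (hoff i hi)

/-- Criterion for central configurations in `S³`. -/
theorem statement6 (N : ℕ) (hN : 2 ≤ N) (m : Fin N → ℝ) (hm : ∀ i, 0 < m i)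
    (q : Fin N → V4) (hq : ∀ i, q i ∈ sphere3)
    (hns : ∀ i j, i ≠ j → q i ≠ q j ∧ q i ≠ -q j) :
    (∃ lam : ℝ, ∀ i, gradUS m q i = lam • gradIS m q i) ↔
    ((∀ i, q i ∈ S1xy ∪ S1zw → gradUS m q i = 0) ∧
      ∃ lam : ℝ, ∀ i, q i ∉ S1xy ∪ S1zw →
        (∑ j ∈ Finset.univ.erase i,
            m j * (q i 0 * q j 0 + q i 1 * q j 1 -
              (q i 0 ^ 2 + q i 1 ^ 2) * Real.cos (dS (q i) (q j))) /
            (Real.sin (dS (q i) (q j))) ^ 3 =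
          2 * lam * (q i 0 ^ 2 + q i 1 ^ 2) * (q i 2 ^ 2 + q i 3 ^ 2)) ∧
        (∑ j ∈ Finset.univ.erase i,
            m j * (q i 0 * q j 1 - q j 0 * q i 1) / (Real.sin (dS (q i) (q j))) ^ 3 = 0) ∧
        (∑ j ∈ Finset.univ.erase i,
            m j * (q i 2 * q j 3 - q j 2 * q i 3) / (Real.sin (dS (q i) (q j))) ^ 3 = 0)) :=
  statement6_general N m hm q hq
end
end

section
/- Let N ≥ 2, m₁,…,m_N > 0, and let q = (q₁,…,q_N) be a nonsingular configuration in H³. Then there exists λ ∈ ℝ with ∇_{qᵢ}U(q) = λ∇_{qᵢ}I(q) for all i if and only if the following hold: (a) for every i with qᵢ ∈ H¹_zw, ∇_{qᵢ}U(q) = 0; and (b) there exists λ ∈ ℝ such that for every i with qᵢ ∉ H¹_zw one has Σ_{j≠i} mⱼ(xᵢxⱼ + yᵢyⱼ − rᵢ² cosh d_ij)/sinh³ d_ij = 2λ rᵢ²ρᵢ², Σ_{j≠i} mⱼ(xᵢyⱼ − xⱼyᵢ)/sinh³ d_ij = 0, and Σ_{j≠i} mⱼ(zᵢwⱼ − zⱼwᵢ)/sinh³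 d_ij = 0. -/
noncomputable section
open Real Finset

/-!
At a body `qᵢ ∈ H³` the force `∇_{qᵢ}U` is Minkowski-orthogonal to `qᵢ`, since each summand
`qⱼ − cosh dᵢⱼ · qᵢ` is (using `cosh dᵢⱼ = −qᵢ⊙qⱼ` and `qᵢ⊙qᵢ = −1`). Off `H¹_zw` we have `rᵢ² > 0`,
and a vector `G` tangent to `H³` at `qᵢ` is then determined by the three numbers
`xᵢG₀ + yᵢG₁`, `xᵢG₁ − yᵢG₀` and `zᵢG₃ − wᵢG₂`; for `G = ∇_{qᵢ}U` these are `mᵢ` times the three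
sums of the statement, while for `G = λ∇_{qᵢ}I` they are `2λmᵢrᵢ²ρᵢ²`, `0`, `0`. On `H¹_zw` the
gradient `∇_{qᵢ}I` vanishes.
-/

lemma one_le_neg_mdot4 {p r : V4} (hp : p ∈ hyper3) (hr : r ∈ hyper3) : 1 ≤ -mdot4 p r := by
  obtain ⟨hp, hp3⟩ := hp
  obtain ⟨hr, hr3⟩ := hr
  have cauchy_schwarz :
      (p 0 * r 0 + p 1 * r 1 + p 2 * r 2) ^ 2 ≤ (p 3 ^ 2 - 1) * (r 3 ^ 2 - 1) := by
    nlinarith [sq_nonneg (p 0 * r 1 - r 0 * p 1), sq_nonneg (p 0 * r 2 - r 0 * p 2),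
      sq_nonneg (p 1 * r 2 - r 1 * p 2)]
  have am_gm : (p 3 ^ 2 - 1) * (r 3 ^ 2 - 1) ≤ (p 3 * r 3 - 1) ^ 2 := by
    nlinarith [sq_nonneg (p 3 - r 3)]
  have one_le_prod : 1 ≤ p 3 * r 3 := by
    nlinarith [sq_nonneg (p 0), sq_nonneg (p 1), sq_nonneg (p 2), sq_nonneg (r 0),
      sq_nonneg (r 1), sq_nonneg (r 2)]
  simp only [mdot4]
  nlinarith

lemma cosh_dH {p r : V4} (hp : p ∈ hyper3) (hr : r ∈ hyper3) : cosh (dH p r) = -mdot4 p r :=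
  Real.cosh_arcosh (one_le_neg_mdot4 hp hr)

lemma sq_add_sq_pos_of_notMem_H1zw {p : V4} (hp : p ∈ hyper3) (hpH : p ∉ H1zw) :
    0 < p 0 ^ 2 + p 1 ^ 2 := by
  obtain ⟨hp, hp3⟩ := hp
  by_contra! hr
  have hx : p 0 = 0 := by nlinarith [sq_nonneg (p 0), sq_nonneg (p 1)]
  have hy : p 1 = 0 := by nlinarith [sq_nonneg (p 0), sq_nonneg (p 1)]
  exact hpH ⟨by rw [hx, hy] at hp; linarith, hp3, hx, hy⟩

def hypInertiaDir (p : V4) : V4 :=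
  ![p 0 * (p 3 ^ 2 - p 2 ^ 2), p 1 * (p 3 ^ 2 - p 2 ^ 2),
    p 2 * (p 0 ^ 2 + p 1 ^ 2), p 3 * (p 0 ^ 2 + p 1 ^ 2)]

lemma gradIH_eq_smul_hypInertiaDir {N : ℕ} (m : Fin N → ℝ) (q : Fin N → V4) (i : Fin N) :
    gradIH m q i = (2 * m i) • hypInertiaDir (q i) :=
  rfl

lemma hypInertiaDir_eq_zero_of_mem_H1zw {p : V4} (hp : p ∈ H1zw) : hypInertiaDir p = 0 := by
  obtain ⟨-, -, hx, hy⟩ := hp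
  ext k
  fin_cases k <;> simp [hypInertiaDir, hx, hy]

lemma gradIH_eq_zero_of_mem_H1zw {N : ℕ} (m : Fin N → ℝ) (q : Fin N → V4) {i : Fin N}
    (hi : q i ∈ H1zw) : gradIH m q i = 0 := by
  rw [gradIH_eq_smul_hypInertiaDir, hypInertiaDir_eq_zero_of_mem_H1zw hi, smul_zero]

lemma eq_smul_hypInertiaDir_iff {p G : V4} (hp : p ∈ hyper3) (hpH : p ∉ H1zw)
    (hG : mdot4 p G = 0) (c : ℝ) :
    G = c • hypInertiaDir p ↔
      p 0 * G 0 + p 1 * G 1 = c * ((p 0 ^ 2 + p 1 ^ 2) * (p 3 ^ 2 - p 2 ^ 2)) ∧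
        p 0 * G 1 - p 1 * G 0 = 0 ∧ p 2 * G 3 - p 3 * G 2 = 0 := by
  constructor
  · rintro rfl
    simp only [hypInertiaDir, Pi.smul_apply, smul_eq_mul, Matrix.cons_val]
    refine ⟨?_, ?_, ?_⟩ <;> ring
  · rintro ⟨radial, angular_xy, angular_zw⟩
    have hr := sq_add_sq_pos_of_notMem_H1zw hp hpH
    obtain ⟨hp, hp3⟩ := hp
    have hρ : 0 < p 3 ^ 2 - p 2 ^ 2 := by linarith
    simp only [mdot4] at hG
    have h0 : G 0 = c * (p 0 * (p 3 ^ 2 - p 2 ^ 2)) := by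
      refine mul_right_cancel₀ hr.ne' ?_
      linear_combination p 0 * radial - p 1 * angular_xy
    have h1 : G 1 = c * (p 1 * (p 3 ^ 2 - p 2 ^ 2)) := by
      refine mul_right_cancel₀ hr.ne' ?_
      linear_combination p 1 * radial + p 0 * angular_xy
    have h2 : G 2 = c * (p 2 * (p 0 ^ 2 + p 1 ^ 2)) := by
      refine mul_right_cancel₀ hρ.ne' ?_
      linear_combination -p 2 * hG + p 2 * radial - p 3 * angular_zw
    have h3 : G 3 = c * (p 3 * (p 0 ^ 2 + p 1 ^ 2)) := by
      refine mul_right_cancel₀ hp3.ne' ?_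
      linear_combination -hG + radial + p 2 * h2
    ext k
    fin_cases k <;> simp [hypInertiaDir, h0, h1, h2, h3]

section gradUH

variable {N : ℕ} (m : Fin N → ℝ) (q : Fin N → V4) (i : Fin N)

lemma gradUH_apply (k : Fin 4) :
    gradUH m q i k = ∑ j ∈ univ.erase i,
      m i * m j / sinh (dH (q i) (q j)) ^ 3 * (q j k - cosh (dH (q i) (q j)) * q i k) := by
  simp [gradUH, Finset.sum_apply]

lemma mdot4_gradUH_self (hq : ∀ j, q j ∈ hyper3) : mdot4 (q i) (gradUH m q i) = 0 := by
  simp only [mdot4, gradUH_apply, Finset.mul_sum, ← Finset.sum_add_distrib,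
    ← Finset.sum_sub_distrib]
  refine Finset.sum_eq_zero fun j _ => ?_
  rw [cosh_dH (hq i) (hq j)]
  simp only [mdot4]
  linear_combination (m i * m j / sinh (dH (q i) (q j)) ^ 3 *
    (q i 0 * q j 0 + q i 1 * q j 1 + q i 2 * q j 2 - q i 3 * q j 3)) * (hq i).1

lemma radial_xy_gradUH :
    q i 0 * gradUH m q i 0 + q i 1 * gradUH m q i 1 =
      m i * ∑ j ∈ univ.erase i,
        m j * (q i 0 * q j 0 + q i 1 * q j 1 -
          (q i 0 ^ 2 + q i 1 ^ 2) * cosh (dH (q i) (q j))) / sinh (dH (q i) (q j)) ^ 3 := by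
  simp only [gradUH_apply, Finset.mul_sum, ← Finset.sum_add_distrib]
  exact Finset.sum_congr rfl fun j _ => by ring

lemma angular_xy_gradUH :
    q i 0 * gradUH m q i 1 - q i 1 * gradUH m q i 0 =
      m i * ∑ j ∈ univ.erase i,
        m j * (q i 0 * q j 1 - q j 0 * q i 1) / sinh (dH (q i) (q j)) ^ 3 := by
  simp only [gradUH_apply, Finset.mul_sum, ← Finset.sum_sub_distrib]
  exact Finset.sum_congr rfl fun j _ => by ring

lemma angular_zw_gradUH :
    q i 2 * gradUH m q i 3 - q i 3 * gradUH m q i 2 =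
      m i * ∑ j ∈ univ.erase i,
        m j * (q i 2 * q j 3 - q j 2 * q i 3) / sinh (dH (q i) (q j)) ^ 3 := by
  simp only [gradUH_apply, Finset.mul_sum, ← Finset.sum_sub_distrib]
  exact Finset.sum_congr rfl fun j _ => by ring

lemma gradUH_eq_smul_gradIH_iff (hmi : m i ≠ 0) (hq : ∀ j, q j ∈ hyper3) (hiH : q i ∉ H1zw)
    (lam : ℝ) :
    gradUH m q i = lam • gradIH m q i ↔
      (∑ j ∈ univ.erase i,
          m j * (q i 0 * q j 0 + q i 1 * q j 1 -
            (q i 0 ^ 2 + q i 1 ^ 2) * cosh (dH (q i) (q j))) / sinh (dH (q i) (q j)) ^ 3 =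
        2 * lam * (q i 0 ^ 2 + q i 1 ^ 2) * (q i 3 ^ 2 - q i 2 ^ 2)) ∧
      (∑ j ∈ univ.erase i,
          m j * (q i 0 * q j 1 - q j 0 * q i 1) / sinh (dH (q i) (q j)) ^ 3 = 0) ∧
      (∑ j ∈ univ.erase i,
          m j * (q i 2 * q j 3 - q j 2 * q i 3) / sinh (dH (q i) (q j)) ^ 3 = 0) := by
  rw [gradIH_eq_smul_hypInertiaDir, smul_smul,
    eq_smul_hypInertiaDir_iff (hq i) hiH (mdot4_gradUH_self m q i hq), radial_xy_gradUH,
    angular_xy_gradUH, angular_zw_gradUH, mul_eq_zero, mul_eq_zero, or_iff_right hmi,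
    or_iff_right hmi]
  refine and_congr ⟨fun h => mul_left_cancel₀ hmi (by linear_combination h),
    fun h => by linear_combination m i * h⟩ Iff.rfl

end gradUH

theorem statement7_general (N : ℕ) (m : Fin N → ℝ) (hm : ∀ i, 0 < m i)
    (q : Fin N → V4) (hq : ∀ i, q i ∈ hyper3) :
    (∃ lam : ℝ, ∀ i, gradUH m q i = lam • gradIH m q i) ↔
    ((∀ i, q i ∈ H1zw → gradUH m q i = 0) ∧
      ∃ lam : ℝ, ∀ i, q i ∉ H1zw →
        (∑ j ∈ Finset.univ.erase i,
            m j * (q i 0 * q j 0 + q i 1 * q j 1 -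
              (q i 0 ^ 2 + q i 1 ^ 2) * Real.cosh (dH (q i) (q j))) /
            (Real.sinh (dH (q i) (q j))) ^ 3 =
          2 * lam * (q i 0 ^ 2 + q i 1 ^ 2) * (q i 3 ^ 2 - q i 2 ^ 2)) ∧
        (∑ j ∈ Finset.univ.erase i,
            m j * (q i 0 * q j 1 - q j 0 * q i 1) / (Real.sinh (dH (q i) (q j))) ^ 3 = 0) ∧
        (∑ j ∈ Finset.univ.erase i,
            m j * (q i 2 * q j 3 - q j 2 * q i 3) / (Real.sinh (dH (q i) (q j))) ^ 3 = 0)) := by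
  constructor
  · rintro ⟨lam, h⟩
    refine ⟨fun i hi => ?_, lam, fun i hi => ?_⟩
    · rw [h i, gradIH_eq_zero_of_mem_H1zw m q hi, smul_zero]
    · exact (gradUH_eq_smul_gradIH_iff m q i (hm i).ne' hq hi lam).1 (h i)
  · rintro ⟨on_H1zw, lam, off_H1zw⟩
    refine ⟨lam, fun i => ?_⟩
    by_cases hi : q i ∈ H1zw
    · rw [on_H1zw i hi, gradIH_eq_zero_of_mem_H1zw m q hi, smul_zero]
    · exact (gradUH_eq_smul_gradIH_iff m q i (hm i).ne' hq hi lam).2 (off_H1zw i hi)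

/-- Criterion for central configurations in `H³`. -/
theorem statement7 (N : ℕ) (hN : 2 ≤ N) (m : Fin N → ℝ) (hm : ∀ i, 0 < m i)
    (q : Fin N → V4) (hq : ∀ i, q i ∈ hyper3)
    (hns : ∀ i j, i ≠ j → q i ≠ q j) :
    (∃ lam : ℝ, ∀ i, gradUH m q i = lam • gradIH m q i) ↔
    ((∀ i, q i ∈ H1zw → gradUH m q i = 0) ∧
      ∃ lam : ℝ, ∀ i, q i ∉ H1zw →
        (∑ j ∈ Finset.univ.erase i,
            m j * (q i 0 * q j 0 + q i 1 * q j 1 -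
              (q i 0 ^ 2 + q i 1 ^ 2) * Real.cosh (dH (q i) (q j))) /
            (Real.sinh (dH (q i) (q j))) ^ 3 =
          2 * lam * (q i 0 ^ 2 + q i 1 ^ 2) * (q i 3 ^ 2 - q i 2 ^ 2)) ∧
        (∑ j ∈ Finset.univ.erase i,
            m j * (q i 0 * q j 1 - q j 0 * q i 1) / (Real.sinh (dH (q i) (q j))) ^ 3 = 0) ∧
        (∑ j ∈ Finset.univ.erase i,
            m j * (q i 2 * q j 3 - q j 2 * q i 3) / (Real.sinh (dH (q i) (q j))) ^ 3 = 0)) :=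
  statement7_general N m hm q hq
end
end

section
/- Let q = (q₁,…,q_N) be an ordinary central configuration in S³ with constant λ, i.e. a nonsingular configuration satisfying ∇_{qᵢ}U(q) = λ∇_{qᵢ}I(q) for all i with ∇_{qᵢ}U(q) ≠ 0 for some i. Then Σᵢ mᵢ rᵢ² ρᵢ² ≠ 0 and λ = [Σ_{1≤i<j≤N} mᵢmⱼ(2xᵢxⱼ + 2yᵢyⱼ − (rᵢ²+rⱼ²) cos d_ij)/sin³ d_ij] / [2 Σᵢ mᵢ rᵢ² ρᵢ²]. In particular, λ is uniquely determined by the configuration. -/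
noncomputable section
open Real Finset

/-! Taking the inner product of the central-configuration equation for body `i` with the
projection `(xᵢ, yᵢ, 0, 0)` of `qᵢ` to the `xy`-plane turns the right-hand side into
`2λ mᵢ rᵢ² ρᵢ²`. Summing over `i` and pairing the terms `(i, j)` and `(j, i)` of the left-hand
side gives the formula for `λ`. The denominator cannot vanish: otherwise every body has
`rᵢ ρᵢ = 0`, so `∇_{qᵢ} I = 0`, and then `∇_{qᵢ} U = 0` for all `i`. -/

theorem sum_sum_erase_eq_sum_sum_lt_add_swap {ι M : Type*} [Fintype ι] [LinearOrder ι]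
    [AddCommMonoid M] (f : ι → ι → M) :
    ∑ i, ∑ j ∈ univ.erase i, f i j = ∑ i, ∑ j ∈ univ.filter (i < ·), (f i j + f j i) := by
  have split (i : ι) : ∑ j ∈ univ.erase i, f i j
      = ∑ j ∈ univ.filter (i < ·), f i j + ∑ j ∈ univ.filter (· < i), f i j := by
    rw [← sum_union (disjoint_filter.2 fun j _ h h' => lt_asymm h h')]
    congr 1
    ext j
    simp [ne_comm, lt_or_lt_iff_ne]
  simp only [split, sum_add_distrib]
  congr 1
  exact sum_comm' fun i j => by simp

lemma dS_comm (p q : V4) : dS p q = dS q p := by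
  unfold dS dot4
  ring_nf

section
variable {N : ℕ} (m : Fin N → ℝ) (q : Fin N → V4) (i : Fin N)

lemma gradUS_inner_xy :
    gradUS m q i 0 * q i 0 + gradUS m q i 1 * q i 1 =
      ∑ j ∈ univ.erase i, m i * m j * (q i 0 * q j 0 + q i 1 * q j 1 -
        (q i 0 ^ 2 + q i 1 ^ 2) * cos (dS (q i) (q j))) / sin (dS (q i) (q j)) ^ 3 := by
  simp only [gradUS, Finset.sum_apply, Pi.smul_apply, Pi.sub_apply, smul_eq_mul, sum_mul,
    ← sum_add_distrib]
  refine sum_congr rfl fun j _ => ?_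
  ring

lemma gradIS_inner_xy :
    gradIS m q i 0 * q i 0 + gradIS m q i 1 * q i 1 =
      2 * (m i * (q i 0 ^ 2 + q i 1 ^ 2) * (q i 2 ^ 2 + q i 3 ^ 2)) := by
  simp only [gradIS, Pi.smul_apply, smul_eq_mul, Matrix.cons_val_zero, Matrix.cons_val_one]
  ring

lemma gradIS_eq_zero_of_mul_eq_zero
    (h : (q i 0 ^ 2 + q i 1 ^ 2) * (q i 2 ^ 2 + q i 3 ^ 2) = 0) : gradIS m q i = 0 := by
  rcases mul_eq_zero.1 h with hr | hρ
  · have hx : q i 0 = 0 := by nlinarith [sq_nonneg (q i 1)]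
    have hy : q i 1 = 0 := by nlinarith [sq_nonneg (q i 0)]
    ext k
    fin_cases k <;> simp [gradIS, hx, hy]
  · have hz : q i 2 = 0 := by nlinarith [sq_nonneg (q i 3)]
    have hw : q i 3 = 0 := by nlinarith [sq_nonneg (q i 2)]
    ext k
    fin_cases k <;> simp [gradIS, hz, hw]

end

section
variable {N : ℕ} {m : Fin N → ℝ} {q : Fin N → V4} {lam : ℝ}

lemma sum_mul_rsq_mul_rhosq_ne_zero (hm : ∀ i, 0 < m i)
    (hcc : ∀ i, gradUS m q i = lam • gradIS m q i) (hord : ∃ i, gradUS m q i ≠ 0) :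
    ∑ i, m i * (q i 0 ^ 2 + q i 1 ^ 2) * (q i 2 ^ 2 + q i 3 ^ 2) ≠ 0 := by
  obtain ⟨i, hi⟩ := hord
  intro hsum
  have hnonneg : ∀ j ∈ univ, 0 ≤ m j * (q j 0 ^ 2 + q j 1 ^ 2) * (q j 2 ^ 2 + q j 3 ^ 2) :=
    fun j _ => by have := (hm j).le; positivity
  have hterm := (sum_eq_zero_iff_of_nonneg hnonneg).1 hsum i (mem_univ i)
  rw [mul_assoc, mul_eq_zero, or_iff_right (hm i).ne'] at hterm
  exact hi (by rw [hcc i, gradIS_eq_zero_of_mul_eq_zero m q i hterm, smul_zero])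

lemma sum_gradUS_inner_xy_eq (hcc : ∀ i, gradUS m q i = lam • gradIS m q i) (i : Fin N) :
    ∑ j ∈ univ.erase i, m i * m j * (q i 0 * q j 0 + q i 1 * q j 1 -
        (q i 0 ^ 2 + q i 1 ^ 2) * cos (dS (q i) (q j))) / sin (dS (q i) (q j)) ^ 3 =
      lam * (2 * (m i * (q i 0 ^ 2 + q i 1 ^ 2) * (q i 2 ^ 2 + q i 3 ^ 2))) := by
  rw [← gradUS_inner_xy, ← gradIS_inner_xy, hcc i]
  simp only [Pi.smul_apply, smul_eq_mul]
  ring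

end

theorem statement8_general (N : ℕ) (m : Fin N → ℝ) (hm : ∀ i, 0 < m i)
    (q : Fin N → V4) (lam : ℝ)
    (hcc : ∀ i, gradUS m q i = lam • gradIS m q i)
    (hord : ∃ i, gradUS m q i ≠ 0) :
    (∑ i, m i * (q i 0 ^ 2 + q i 1 ^ 2) * (q i 2 ^ 2 + q i 3 ^ 2)) ≠ 0 ∧
    lam = (∑ i, ∑ j ∈ Finset.univ.filter (fun j => i < j),
        m i * m j * (2 * q i 0 * q j 0 + 2 * q i 1 * q j 1 -
          ((q i 0 ^ 2 + q i 1 ^ 2) + (q j 0 ^ 2 + q j 1 ^ 2)) * Real.cos (dS (q i) (q j))) /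
        (Real.sin (dS (q i) (q j))) ^ 3) /
      (2 * ∑ i, m i * (q i 0 ^ 2 + q i 1 ^ 2) * (q i 2 ^ 2 + q i 3 ^ 2)) := by
  have hS := sum_mul_rsq_mul_rhosq_ne_zero hm hcc hord
  refine ⟨hS, ?_⟩
  rw [eq_div_iff (mul_ne_zero two_ne_zero hS), mul_sum, mul_sum,
    ← sum_congr rfl fun i _ => sum_gradUS_inner_xy_eq hcc i,
    sum_sum_erase_eq_sum_sum_lt_add_swap]
  refine sum_congr rfl fun i _ => sum_congr rfl fun j _ => ?_
  rw [dS_comm (q j) (q i)]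
  ring

/-- The value of `λ` for an ordinary central configuration in `S³`. -/
theorem statement8 (N : ℕ) (m : Fin N → ℝ) (hm : ∀ i, 0 < m i)
    (q : Fin N → V4) (hq : ∀ i, q i ∈ sphere3)
    (hns : ∀ i j, i ≠ j → q i ≠ q j ∧ q i ≠ -q j) (lam : ℝ)
    (hcc : ∀ i, gradUS m q i = lam • gradIS m q i)
    (hord : ∃ i, gradUS m q i ≠ 0) :
    (∑ i, m i * (q i 0 ^ 2 + q i 1 ^ 2) * (q i 2 ^ 2 + q i 3 ^ 2)) ≠ 0 ∧
    lam = (∑ i, ∑ j ∈ Finset.univ.filter (fun j => i < j),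
        m i * m j * (2 * q i 0 * q j 0 + 2 * q i 1 * q j 1 -
          ((q i 0 ^ 2 + q i 1 ^ 2) + (q j 0 ^ 2 + q j 1 ^ 2)) * Real.cos (dS (q i) (q j))) /
        (Real.sin (dS (q i) (q j))) ^ 3) /
      (2 * ∑ i, m i * (q i 0 ^ 2 + q i 1 ^ 2) * (q i 2 ^ 2 + q i 3 ^ 2)) :=
  statement8_general N m hm q lam hcc hord
end
end

section
/- Let q = (q₁,…,q_N), qᵢ = (xᵢ,yᵢ,zᵢ,wᵢ), be an ordinary central configuration in S³ or in H³, i.e. a nonsingular configuration satisfying ∇_{qᵢ}U(q) = λ∇_{qᵢ}I(q) for all i with λ ≠ 0. Then Σᵢ mᵢxᵢzᵢ = Σᵢ mᵢxᵢwᵢ = Σᵢ mᵢyᵢzᵢ = Σᵢ mᵢyᵢwᵢ = 0. -/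
noncomputable section
open Real Finset

lemma dH_comm (p q : V4) : dH p q = dH q p := by
  unfold dH mdot4; ring_nf

lemma Finset.sum_sum_erase_eq_zero_of_antisymm {ι : Type*} [Fintype ι] [DecidableEq ι]
    (f : ι → ι → ℝ) (hf : ∀ i j, f i j = -f j i) :
    ∑ i, ∑ j ∈ univ.erase i, f i j = 0 := by
  have hdiag : ∀ i, f i i = 0 := fun i => by linarith [hf i i]
  have hfull : ∑ i, ∑ j ∈ univ.erase i, f i j = ∑ i, ∑ j, f i j :=
    sum_congr rfl fun i _ => sum_erase _ (hdiag i)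
  have hswap : ∑ i, ∑ j, f i j = ∑ i, ∑ j, -f i j := by
    rw [sum_comm]
    exact sum_congr rfl fun i _ => sum_congr rfl fun j _ => hf j i
  simp only [sum_neg_distrib] at hswap
  rw [hfull]; linarith

section PairwiseForce

variable {ι κ : Type*} [Fintype ι] [DecidableEq ι]

def pairwiseForce (c k : ι → ι → ℝ) (q : ι → κ → ℝ) (i : ι) : κ → ℝ :=
  ∑ j ∈ univ.erase i, c i j • (q j - k i j • q i)

lemma gradUS_eq_pairwiseForce {N : ℕ} (m : Fin N → ℝ) (q : Fin N → V4) :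
    gradUS m q = pairwiseForce (fun i j => m i * m j / sin (dS (q i) (q j)) ^ 3)
      (fun i j => cos (dS (q i) (q j))) q := rfl

lemma gradUH_eq_pairwiseForce {N : ℕ} (m : Fin N → ℝ) (q : Fin N → V4) :
    gradUH m q = pairwiseForce (fun i j => m i * m j / sinh (dH (q i) (q j)) ^ 3)
      (fun i j => cosh (dH (q i) (q j))) q := rfl

theorem sum_torque_pairwiseForce_eq_zero {c : ι → ι → ℝ} (hc : ∀ i j, c i j = c j i)
    (k : ι → ι → ℝ) (q : ι → κ → ℝ) (a b : κ) :
    ∑ i, (q i b * pairwiseForce c k q i a - q i a * pairwiseForce c k q i b) = 0 := by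
  have hterm : ∀ i, q i b * pairwiseForce c k q i a - q i a * pairwiseForce c k q i b =
      ∑ j ∈ univ.erase i, c i j * (q j a * q i b - q j b * q i a) := by
    intro i
    simp only [pairwiseForce, Finset.sum_apply, Pi.smul_apply, Pi.sub_apply, smul_eq_mul, mul_sum,
      ← sum_sub_distrib]
    exact sum_congr rfl fun j _ => by ring
  rw [sum_congr rfl fun i _ => hterm i]
  exact sum_sum_erase_eq_zero_of_antisymm _ fun i j => by rw [hc i j]; ring

theorem sum_mul_mul_eq_zero_of_pairwiseForce_eq_smul {c : ι → ι → ℝ} (hc : ∀ i j, c i j = c j i)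
    {k : ι → ι → ℝ} {q : ι → κ → ℝ} {G : ι → κ → ℝ} {lam : ℝ} (hlam : lam ≠ 0)
    (hF : ∀ i, pairwiseForce c k q i = lam • G i) (m : ι → ℝ) {a b : κ}
    (hG : ∀ i, q i b * G i a - q i a * G i b = 2 * m i * (q i a * q i b)) :
    ∑ i, m i * q i a * q i b = 0 := by
  have htorque := sum_torque_pairwiseForce_eq_zero hc k q a b
  simp only [hF, Pi.smul_apply, smul_eq_mul] at htorque
  have : lam * 2 * ∑ i, m i * q i a * q i b = 0 := by
    rw [← htorque, mul_sum]
    exact sum_congr rfl fun i _ => by linear_combination (-lam) * hG i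
  simpa [hlam] using this

end PairwiseForce

def xyProj (p : V4) : V4 := fun k => if (k : ℕ) < 2 then p k else 0

lemma torque_smul_xyProj_add_smul {p v : V4} {s t : ℝ} (hv : v = t • xyProj p + s • p)
    {a b : Fin 4} (ha : (a : ℕ) < 2) (hb : 2 ≤ (b : ℕ)) :
    p b * v a - p a * v b = t * (p a * p b) := by
  subst hv
  simp only [xyProj, Pi.add_apply, Pi.smul_apply, smul_eq_mul, if_pos ha, if_neg hb.not_gt]
  ring

lemma gradIS_eq_of_mem_sphere3 {N : ℕ} (m : Fin N → ℝ) (q : Fin N → V4) {i : Fin N}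
    (hq : q i ∈ sphere3) :
    gradIS m q i = (2 * m i) • xyProj (q i) + (-(2 * m i * (q i 0 ^ 2 + q i 1 ^ 2))) • q i := by
  have hs : q i 0 ^ 2 + q i 1 ^ 2 + q i 2 ^ 2 + q i 3 ^ 2 = 1 := hq
  have hρ : q i 2 ^ 2 + q i 3 ^ 2 = 1 - (q i 0 ^ 2 + q i 1 ^ 2) := by linear_combination hs
  rw [gradIS, hρ]
  ext k
  fin_cases k <;>
    simp only [xyProj, Pi.add_apply, Pi.smul_apply, smul_eq_mul, Fin.isValue, Fin.reduceFinMk,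
      Fin.zero_eta, Fin.mk_one, Matrix.cons_val, Matrix.cons_val_zero, Matrix.cons_val_one,
      Fin.coe_ofNat_eq_mod, Nat.reduceMod, Nat.reduceLT, ↓reduceIte] <;> ring

lemma gradIH_eq_of_mem_hyper3 {N : ℕ} (m : Fin N → ℝ) (q : Fin N → V4) {i : Fin N}
    (hq : q i ∈ hyper3) :
    gradIH m q i = (2 * m i) • xyProj (q i) + (2 * m i * (q i 0 ^ 2 + q i 1 ^ 2)) • q i := by
  have hs : q i 0 ^ 2 + q i 1 ^ 2 + q i 2 ^ 2 - q i 3 ^ 2 = -1 := hq.1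
  have hρ : q i 3 ^ 2 - q i 2 ^ 2 = 1 + (q i 0 ^ 2 + q i 1 ^ 2) := by linear_combination -hs
  rw [gradIH, hρ]
  ext k
  fin_cases k <;>
    simp only [xyProj, Pi.add_apply, Pi.smul_apply, smul_eq_mul, Fin.isValue, Fin.reduceFinMk,
      Fin.zero_eta, Fin.mk_one, Matrix.cons_val, Matrix.cons_val_zero, Matrix.cons_val_one,
      Fin.coe_ofNat_eq_mod, Nat.reduceMod, Nat.reduceLT, ↓reduceIte] <;> ring

theorem sum_mul_mul_eq_zero_of_sphere3 {N : ℕ} {m : Fin N → ℝ} {q : Fin N → V4} {lam : ℝ}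
    (hlam : lam ≠ 0) (hS : ∀ i, q i ∈ sphere3) (hcc : ∀ i, gradUS m q i = lam • gradIS m q i)
    {a b : Fin 4} (ha : (a : ℕ) < 2) (hb : 2 ≤ (b : ℕ)) :
    ∑ i, m i * q i a * q i b = 0 := by
  rw [gradUS_eq_pairwiseForce] at hcc
  refine sum_mul_mul_eq_zero_of_pairwiseForce_eq_smul (fun i j => ?_) hlam hcc m fun i => ?_
  · simp only [dS_comm (q j), mul_comm (m i)]
  · exact torque_smul_xyProj_add_smul (gradIS_eq_of_mem_sphere3 m q (hS i)) ha hb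

theorem sum_mul_mul_eq_zero_of_hyper3 {N : ℕ} {m : Fin N → ℝ} {q : Fin N → V4} {lam : ℝ}
    (hlam : lam ≠ 0) (hH : ∀ i, q i ∈ hyper3) (hcc : ∀ i, gradUH m q i = lam • gradIH m q i)
    {a b : Fin 4} (ha : (a : ℕ) < 2) (hb : 2 ≤ (b : ℕ)) :
    ∑ i, m i * q i a * q i b = 0 := by
  rw [gradUH_eq_pairwiseForce] at hcc
  refine sum_mul_mul_eq_zero_of_pairwiseForce_eq_smul (fun i j => ?_) hlam hcc m fun i => ?_
  · simp only [dH_comm (q j), mul_comm (m i)]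
  · exact torque_smul_xyProj_add_smul (gradIH_eq_of_mem_hyper3 m q (hH i)) ha hb

theorem statement11_general (N : ℕ) (m : Fin N → ℝ)
    (q : Fin N → V4) (lam : ℝ) (hlam : lam ≠ 0)
    (h : ((∀ i, q i ∈ sphere3) ∧ (∀ i j, i ≠ j → q i ≠ q j ∧ q i ≠ -q j) ∧
            ∀ i, gradUS m q i = lam • gradIS m q i) ∨
         ((∀ i, q i ∈ hyper3) ∧ (∀ i j, i ≠ j → q i ≠ q j) ∧
            ∀ i, gradUH m q i = lam • gradIH m q i)) :
    (∑ i, m i * q i 0 * q i 2 = 0) ∧ (∑ i, m i * q i 0 * q i 3 = 0) ∧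
    (∑ i, m i * q i 1 * q i 2 = 0) ∧ (∑ i, m i * q i 1 * q i 3 = 0) := by
  rcases h with ⟨hS, -, hcc⟩ | ⟨hH, -, hcc⟩
  · refine ⟨?_, ?_, ?_, ?_⟩ <;>
      exact sum_mul_mul_eq_zero_of_sphere3 hlam hS hcc (by decide) (by decide)
  · refine ⟨?_, ?_, ?_, ?_⟩ <;>
      exact sum_mul_mul_eq_zero_of_hyper3 hlam hH hcc (by decide) (by decide)

/-- The "centre of mass"-type relations for ordinary central
configurations in `S³` or `H³`. -/
theorem statement11 (N : ℕ) (m : Fin N → ℝ) (hm : ∀ i, 0 < m i)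
    (q : Fin N → V4) (lam : ℝ) (hlam : lam ≠ 0)
    (h : ((∀ i, q i ∈ sphere3) ∧ (∀ i j, i ≠ j → q i ≠ q j ∧ q i ≠ -q j) ∧
            ∀ i, gradUS m q i = lam • gradIS m q i) ∨
         ((∀ i, q i ∈ hyper3) ∧ (∀ i j, i ≠ j → q i ≠ q j) ∧
            ∀ i, gradUH m q i = lam • gradIH m q i)) :
    (∑ i, m i * q i 0 * q i 2 = 0) ∧ (∑ i, m i * q i 0 * q i 3 = 0) ∧
    (∑ i, m i * q i 1 * q i 2 = 0) ∧ (∑ i, m i * q i 1 * q i 3 = 0) :=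
  statement11_general N m q lam hlam h
end
end

section
/- Let m₁,…,m_N > 0 and let c ≥ 0 be such that c ≠ Σᵢ mᵢμᵢ for every choice of μ₁,…,μ_N ∈ {0,1}. Then c is a regular value of the moment of inertia I : (S³)^N → ℝ: for every q = (q₁,…,q_N) ∈ (S³)^N with I(q) = c there exists an index i such that 0 < xᵢ²+yᵢ² < 1, i.e. qᵢ ∉ S¹_xy ∪ S¹_zw and hence ∇_{qᵢ}I(q) ≠ 0. Consequently I⁻¹(c) is a smooth submanifold of (S³)^N. -/
noncomputable section
open Real Finset

theorem sq_add_sq_le_one_of_mem_sphere3 {p : V4} (hp : p ∈ sphere3) :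
    p 0 ^ 2 + p 1 ^ 2 ≤ 1 := by
  simp only [sphere3, Set.mem_ofPred_eq] at hp
  nlinarith [sq_nonneg (p 2), sq_nonneg (p 3)]

theorem sq_add_sq_pos_of_mem_sphere3 {p : V4} (hp : p ∈ sphere3) (h : p 0 ^ 2 + p 1 ^ 2 < 1) :
    0 < p 2 ^ 2 + p 3 ^ 2 := by
  simp only [sphere3, Set.mem_ofPred_eq] at hp
  linarith

theorem exists_mem_Ioo_of_forall_ne_sum {ι : Type*} [Fintype ι] (m f : ι → ℝ)
    (hf : ∀ i, f i ∈ Set.Icc 0 1)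
    (h : ∀ μ : ι → ℝ, (∀ i, μ i = 0 ∨ μ i = 1) →
      ∑ i, m i * f i ≠ ∑ i, m i * μ i) :
    ∃ i, f i ∈ Set.Ioo 0 1 := by
  by_contra! hcon
  refine h f (fun i => ?_) rfl
  obtain ⟨h0, h1⟩ := hf i
  rcases h0.eq_or_lt with h0 | h0
  · exact Or.inl h0.symm
  · exact Or.inr (le_antisymm h1 (not_lt.1 fun h1 => hcon i ⟨h0, h1⟩))

theorem notMem_S1xy_union_S1zw {p : V4} (h0 : 0 < p 0 ^ 2 + p 1 ^ 2)
    (h1 : p 0 ^ 2 + p 1 ^ 2 < 1) : p ∉ S1xy ∪ S1zw := by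
  rintro (⟨hxy, -, -⟩ | ⟨-, hx, hy⟩)
  · exact h1.ne hxy
  · simp [hx, hy] at h0

theorem gradIS_ne_zero {N : ℕ} {m : Fin N → ℝ} {q : Fin N → V4} {i : Fin N} (hm : m i ≠ 0)
    (hr : 0 < q i 0 ^ 2 + q i 1 ^ 2) (hρ : 0 < q i 2 ^ 2 + q i 3 ^ 2) : gradIS m q i ≠ 0 := by
  intro hgrad
  have hx := congrFun hgrad 0
  have hy := congrFun hgrad 1
  simp only [gradIS, Pi.smul_apply, Matrix.cons_val_zero, Matrix.cons_val_one, smul_eq_mul,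
    Pi.zero_apply, mul_eq_zero, hm, hρ.ne', OfNat.ofNat_ne_zero, false_or, or_false] at hx hy
  simp [hx, hy] at hr

theorem statement12_general (N : ℕ) (m : Fin N → ℝ) (hm : ∀ i, 0 < m i) (c : ℝ)
    (hreg : ∀ μ : Fin N → ℝ, (∀ i, μ i = 0 ∨ μ i = 1) → c ≠ ∑ i, m i * μ i) :
    ∀ q : Fin N → V4, (∀ i, q i ∈ sphere3) →
      (∑ i, m i * (q i 0 ^ 2 + q i 1 ^ 2)) = c →
      ∃ i, 0 < q i 0 ^ 2 + q i 1 ^ 2 ∧ q i 0 ^ 2 + q i 1 ^ 2 < 1 ∧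
        q i ∉ S1xy ∪ S1zw ∧ gradIS m q i ≠ 0 := by
  intro q hq hI
  obtain ⟨i, hr0, hr1⟩ := exists_mem_Ioo_of_forall_ne_sum m (fun i => q i 0 ^ 2 + q i 1 ^ 2)
    (fun i => ⟨by positivity, sq_add_sq_le_one_of_mem_sphere3 (hq i)⟩) (hI ▸ hreg)
  exact ⟨i, hr0, hr1, notMem_S1xy_union_S1zw hr0 hr1,
    gradIS_ne_zero (hm i).ne' hr0 (sq_add_sq_pos_of_mem_sphere3 (hq i) hr1)⟩

/-- Values `c` not of the form `Σ mᵢμᵢ`, `μᵢ ∈ {0,1}`, are regular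
values of the moment of inertia on `(S³)^N`. -/
theorem statement12 (N : ℕ) (m : Fin N → ℝ) (hm : ∀ i, 0 < m i) (c : ℝ) (hc : 0 ≤ c)
    (hreg : ∀ μ : Fin N → ℝ, (∀ i, μ i = 0 ∨ μ i = 1) → c ≠ ∑ i, m i * μ i) :
    ∀ q : Fin N → V4, (∀ i, q i ∈ sphere3) →
      (∑ i, m i * (q i 0 ^ 2 + q i 1 ^ 2)) = c →
      ∃ i, 0 < q i 0 ^ 2 + q i 1 ^ 2 ∧ q i 0 ^ 2 + q i 1 ^ 2 < 1 ∧
        q i ∉ S1xy ∪ S1zw ∧ gradIS m q i ≠ 0 :=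
  statement12_general N m hm c hreg
end
end

section
/- For any N ≥ 2 and any masses m₁,…,m_N > 0: (i) there exists a nonsingular configuration q in (S³)^N and a constant λ ∈ ℝ such that ∇_{qᵢ}U(q) = λ∇_{qᵢ}I(q) for all i and ∇_{qᵢ}U(q) ≠ 0 for some i (an ordinary central configuration in S³); and (ii) there exists a nonsingular configuration q in (H³)^N and a constant λ ∈ ℝ such that ∇_{qᵢ}U(q) = λ∇_{qᵢ}I(q) for all i (a central configuration in H³). -/
noncomputable section
open Real Finset

/-!
Both configurations are placed on one geodesic, parametrised by arclength: the great circle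
`θ ↦ (cos θ, 0, sin θ, 0)` of `S³` and the branch `s ↦ (sinh s, 0, 0, cosh s)` of `H³`. Along such a
geodesic `∇U` and `∇I` at every body are multiples of the unit tangent, so the equations
`∇U = λ ∇I` become the critical-point equations of a one-dimensional energy
`Σ_{i<j} mᵢ mⱼ φ(x_j - x_i) + Σ mᵢ ψ(xᵢ)`, with `φ = cot`, `ψ = K cos²` on the circle and
`φ = coth`, `ψ = sinh²` on the hyperbola (`λ = -K`, resp. `λ = -1`).

Such an energy attains a local minimum at an interior point of the compact set of ordered
configurations in a box `[a, b]` with gaps `≥ δ`, as soon as one configuration of that set has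
energy below all boundary values: `φ(δ) → ∞` as `δ → 0⁺` excludes the gap faces, and `ψ` large at
`a` and `b` excludes the walls. On the circle the box is `[π/4, 3π/4]`, where `cot` of every gap
is nonnegative, and the walls are excluded by taking `K` large against a tight cluster at `π/2`.
The first body of the spherical configuration is pulled towards all the others, so it is not a
fixed point.
-/

open Filter Topology

namespace CentralConfiguration

variable {N : ℕ}

def gapBox (a b δ : ℝ) : Set (Fin N → ℝ) :=
  {x | (∀ i, a ≤ x i ∧ x i ≤ b) ∧ ∀ i j, i < j → x i + δ ≤ x j}

def strictGapBox (a b δ : ℝ) : Set (Fin N → ℝ) :=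
  {x | (∀ i, a < x i ∧ x i < b) ∧ ∀ i j, i < j → x i + δ < x j}

theorem isCompact_gapBox (a b δ : ℝ) : IsCompact (gapBox (N := N) a b δ) := by
  refine (isCompact_univ_pi fun _ => isCompact_Icc (a := a) (b := b)).of_isClosed_subset ?_
    fun x hx i _ => (hx.1 i)
  simp only [gapBox, Set.ofPred_and, Set.ofPred_forall]
  exact (isClosed_iInter fun i => (isClosed_le continuous_const (continuous_apply i)).inter
      (isClosed_le (continuous_apply i) continuous_const)).inter
    (isClosed_iInter fun i => isClosed_iInter fun j => isClosed_iInter fun _ =>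
      isClosed_le ((continuous_apply i).add continuous_const) (continuous_apply j))

theorem isOpen_strictGapBox (a b δ : ℝ) : IsOpen (strictGapBox (N := N) a b δ) := by
  simp only [strictGapBox, Set.ofPred_and, Set.ofPred_forall]
  exact (isOpen_iInter_of_finite fun i => (isOpen_lt continuous_const (continuous_apply i)).inter
      (isOpen_lt (continuous_apply i) continuous_const)).inter
    (isOpen_iInter_of_finite fun i => isOpen_iInter_of_finite fun j =>
      isOpen_iInter_of_finite fun _ =>
      isOpen_lt ((continuous_apply i).add continuous_const) (continuous_apply j))

theorem strictGapBox_subset_gapBox (a b δ : ℝ) :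
    strictGapBox (N := N) a b δ ⊆ gapBox a b δ :=
  fun _ hx => ⟨fun i => ⟨(hx.1 i).1.le, (hx.1 i).2.le⟩, fun i j hij => (hx.2 i j hij).le⟩

theorem exists_eq_of_mem_gapBox_of_notMem_strictGapBox {a b δ : ℝ} {x : Fin N → ℝ}
    (hx : x ∈ gapBox a b δ) (hx' : x ∉ strictGapBox a b δ) :
    (∃ i, x i = a ∨ x i = b) ∨ ∃ i j, i < j ∧ x j - x i = δ := by
  simp only [strictGapBox, Set.mem_ofPred_eq, not_and_or, not_forall, not_lt] at hx'
  rcases hx' with ⟨i, hi | hi⟩ | ⟨i, j, hij, hgap⟩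
  · exact Or.inl ⟨i, Or.inl (le_antisymm hi (hx.1 i).1)⟩
  · exact Or.inl ⟨i, Or.inr (le_antisymm (hx.1 i).2 hi)⟩
  · exact Or.inr ⟨i, j, hij, by linarith [hx.2 i j hij]⟩

theorem gapBox_mono {a b δ a' b' δ' : ℝ} (ha : a' ≤ a) (hb : b ≤ b') (hδ : δ' ≤ δ) :
    gapBox (N := N) a b δ ⊆ gapBox a' b' δ' :=
  fun _ hx => ⟨fun i => ⟨ha.trans (hx.1 i).1, (hx.1 i).2.trans hb⟩,
    fun i j hij => by linarith [hx.2 i j hij]⟩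

theorem add_mul_mem_gapBox (c : ℝ) {ε : ℝ} (hε : 0 ≤ ε) :
    (fun i : Fin N => c + (i : ℕ) * ε) ∈ gapBox c (c + N * ε) ε := by
  refine ⟨fun i => ⟨le_add_of_nonneg_right (by positivity), ?_⟩, fun i j hij => ?_⟩
  · have : ((i : ℕ) : ℝ) ≤ N := by exact_mod_cast i.is_lt.le
    have := mul_le_mul_of_nonneg_right this hε
    linarith
  · have : ((i : ℕ) : ℝ) + 1 ≤ (j : ℕ) := by exact_mod_cast hij
    have := mul_le_mul_of_nonneg_right this hε
    linarith

def energy (m : Fin N → ℝ) (φ ψ : ℝ → ℝ) (x : Fin N → ℝ) : ℝ :=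
  ∑ j, ∑ i ∈ Iio j, m i * m j * φ (x j - x i) + ∑ i, m i * ψ (x i)

section Existence

variable {m : Fin N → ℝ} {φ ψ : ℝ → ℝ} {a b δ : ℝ} {x : Fin N → ℝ}

theorem sub_mem_Icc_of_mem_gapBox (hx : x ∈ gapBox a b δ) {i j : Fin N} (hij : i < j) :
    x j - x i ∈ Set.Icc δ (b - a) :=
  ⟨by linarith [hx.2 i j hij], by linarith [(hx.1 i).1, (hx.1 j).2]⟩

theorem continuousOn_energy (hφc : ContinuousOn φ (Set.Icc δ (b - a)))
    (hψc : ContinuousOn ψ (Set.Icc a b)) : ContinuousOn (energy m φ ψ) (gapBox a b δ) := by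
  refine ContinuousOn.add (continuousOn_finsetSum _ fun j _ => continuousOn_finsetSum _
    fun i hi => continuousOn_const.mul (hφc.comp (by fun_prop)
      fun x hx => sub_mem_Icc_of_mem_gapBox hx (mem_Iio.1 hi)))
    (continuousOn_finsetSum _ fun i _ => continuousOn_const.mul
      (hψc.comp (by fun_prop) fun x hx => hx.1 i))

variable (hm : ∀ i, 0 ≤ m i) (hφ0 : ∀ t ∈ Set.Icc δ (b - a), 0 ≤ φ t)
  (hψ0 : ∀ t ∈ Set.Icc a b, 0 ≤ ψ t)
include hm hφ0 hψ0

theorem mul_mul_le_energy (hx : x ∈ gapBox a b δ) {i j : Fin N} (hij : i < j) :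
    m i * m j * φ (x j - x i) ≤ energy m φ ψ x := by
  have hpair : ∀ j, ∀ i ∈ Iio j, 0 ≤ m i * m j * φ (x j - x i) := fun j i hi =>
    mul_nonneg (mul_nonneg (hm i) (hm j))
      (hφ0 _ (sub_mem_Icc_of_mem_gapBox hx (mem_Iio.1 hi)))
  calc m i * m j * φ (x j - x i) ≤ ∑ i ∈ Iio j, m i * m j * φ (x j - x i) :=
        single_le_sum (hpair j) (mem_Iio.2 hij)
    _ ≤ ∑ j, ∑ i ∈ Iio j, m i * m j * φ (x j - x i) :=
        single_le_sum (fun j _ => sum_nonneg (hpair j)) (mem_univ j)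
    _ ≤ energy m φ ψ x :=
        le_add_of_nonneg_right (sum_nonneg fun i _ => mul_nonneg (hm i) (hψ0 _ (hx.1 i)))

theorem mul_le_energy (hx : x ∈ gapBox a b δ) (i : Fin N) :
    m i * ψ (x i) ≤ energy m φ ψ x := by
  have hpair : ∀ j, ∀ i ∈ Iio j, 0 ≤ m i * m j * φ (x j - x i) := fun j i hi =>
    mul_nonneg (mul_nonneg (hm i) (hm j))
      (hφ0 _ (sub_mem_Icc_of_mem_gapBox hx (mem_Iio.1 hi)))
  calc m i * ψ (x i) ≤ ∑ i, m i * ψ (x i) :=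
        single_le_sum (fun i _ => mul_nonneg (hm i) (hψ0 _ (hx.1 i))) (mem_univ i)
    _ ≤ energy m φ ψ x :=
        le_add_of_nonneg_left (sum_nonneg fun j _ => sum_nonneg (hpair j))

theorem exists_isLocalMin_energy (hφc : ContinuousOn φ (Set.Icc δ (b - a)))
    (hψc : ContinuousOn ψ (Set.Icc a b)) {w : Fin N → ℝ} (hw : w ∈ gapBox a b δ)
    (ha : ∀ i, energy m φ ψ w < m i * ψ a) (hb : ∀ i, energy m φ ψ w < m i * ψ b)
    (hgap : ∀ i j, i < j → energy m φ ψ w < m i * m j * φ δ) :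
    ∃ p ∈ strictGapBox a b δ, IsLocalMin (energy m φ ψ) p := by
  refine (isCompact_gapBox a b δ).exists_isLocalMin_mem_open (strictGapBox_subset_gapBox a b δ)
    (continuousOn_energy hφc hψc) hw (fun x ⟨hx, hx'⟩ => ?_) (isOpen_strictGapBox a b δ)
  rcases exists_eq_of_mem_gapBox_of_notMem_strictGapBox hx hx' with
    ⟨i, hxi | hxi⟩ | ⟨i, j, hij, hxij⟩
  · exact (ha i).trans_le (hxi ▸ mul_le_energy hm hφ0 hψ0 hx i)
  · exact (hb i).trans_le (hxi ▸ mul_le_energy hm hφ0 hψ0 hx i)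
  · exact (hgap i j hij).trans_le (hxij ▸ mul_mul_le_energy hm hφ0 hψ0 hx hij)

end Existence

theorem sum_sum_Iio_mul_ite_sub {R : Type*} [CommRing R] (c : Fin N → Fin N → R) (k : Fin N) :
    ∑ j, ∑ i ∈ Iio j, c i j * ((if j = k then 1 else 0) - if i = k then 1 else 0)
      = ∑ i ∈ Iio k, c i k - ∑ j ∈ Ioi k, c k j := by
  simp only [mul_sub, mul_ite, mul_one, mul_zero, sum_sub_distrib, sum_ite_eq', mem_Iio]
  rw [sum_eq_single k (fun j _ hj => by simp [hj]) (by simp)]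
  simp only [if_true, ← sum_filter, filter_lt_eq_Ioi]

theorem energy_partial_eq_zero_of_isLocalMin {m p : Fin N → ℝ} {φ ψ φ' ψ' : ℝ → ℝ}
    (hmin : IsLocalMin (energy m φ ψ) p)
    (hφ : ∀ i j, i < j → HasDerivAt φ (φ' (p j - p i)) (p j - p i))
    (hψ : ∀ i, HasDerivAt ψ (ψ' (p i)) (p i)) (k : Fin N) :
    ∑ i ∈ Iio k, m i * m k * φ' (p k - p i) - ∑ j ∈ Ioi k, m k * m j * φ' (p j - p k)
      + m k * ψ' (p k) = 0 := by
  have hderiv : HasFDerivAt (energy m φ ψ) _ p := HasFDerivAt.add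
    (HasFDerivAt.fun_sum fun j _ => HasFDerivAt.fun_sum fun i hi =>
      ((hφ i j (mem_Iio.1 hi)).comp_hasFDerivAt p ((hasFDerivAt_apply (𝕜 := ℝ) j p).sub
        (hasFDerivAt_apply (𝕜 := ℝ) i p))).const_mul (m i * m j))
    (HasFDerivAt.fun_sum fun i _ =>
      ((hψ i).comp_hasFDerivAt p (hasFDerivAt_apply (𝕜 := ℝ) i p)).const_mul (m i))
  have := congrArg (· (Pi.single k 1)) (hmin.hasFDerivAt_eq_zero hderiv)
  simp only [add_apply, _root_.sum_apply, smul_apply, sub_apply, ContinuousLinearMap.proj_apply,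
    Pi.single_apply, smul_eq_mul, mul_ite, mul_one, mul_zero, sum_ite_eq', mem_univ, ↓reduceIte,
    zero_apply] at this
  simp_rw [← mul_assoc] at this
  rwa [sum_sum_Iio_mul_ite_sub] at this

def pairForce (g : ℝ → ℝ) (m x : Fin N → ℝ) (k : Fin N) : ℝ :=
  ∑ j ∈ univ.erase k, m k * m j / |g (x j - x k)| ^ 3 * g (x j - x k)

section PairForce

variable {g : ℝ → ℝ} {m x : Fin N → ℝ}

theorem pairForce_eq_sub (hg : ∀ t, g (-t) = -g t) (hpos : ∀ i j, i < j → 0 < g (x j - x i))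
    (k : Fin N) :
    pairForce g m x k = ∑ j ∈ Ioi k, m k * m j / g (x j - x k) ^ 2
      - ∑ i ∈ Iio k, m i * m k / g (x k - x i) ^ 2 := by
  have hsplit : univ.erase k = Iio k ∪ Ioi k := by ext j; simp
  rw [pairForce, hsplit, sum_union (disjoint_Ioi_Iio k).symm, add_comm, sub_eq_add_neg,
    ← sum_neg_distrib]
  congr 1 <;> refine sum_congr rfl fun j hj => ?_
  · have := hpos k j (mem_Ioi.1 hj)
    rw [abs_of_pos this]
    field_simp
  · have := hpos j k (mem_Iio.1 hj)
    rw [show x j - x k = -(x k - x j) by ring, hg, abs_neg, abs_of_pos this]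
    field_simp

theorem pairForce_pos (hm : ∀ i, 0 < m i) {k : Fin N} (hpos : ∀ j ≠ k, 0 < g (x j - x k))
    {j : Fin N} (hjk : j ≠ k) : 0 < pairForce g m x k :=
  sum_pos (fun i hi => by
    have := hpos i (ne_of_mem_erase hi)
    have := hm i; have := hm k
    positivity) ⟨j, mem_erase.2 ⟨hjk, mem_univ j⟩⟩

theorem pairForce_eq_of_isLocalMin {φ ψ ψ' : ℝ → ℝ} (hmin : IsLocalMin (energy m φ ψ) x)
    (hg : ∀ t, g (-t) = -g t) (hpos : ∀ i j, i < j → 0 < g (x j - x i))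
    (hφ : ∀ i j, i < j → HasDerivAt φ (-(g (x j - x i) ^ 2)⁻¹) (x j - x i))
    (hψ : ∀ i, HasDerivAt ψ (ψ' (x i)) (x i)) (k : Fin N) :
    pairForce g m x k = -(m k * ψ' (x k)) := by
  have := energy_partial_eq_zero_of_isLocalMin (φ' := fun t => -(g t ^ 2)⁻¹) hmin hφ hψ k
  rw [pairForce_eq_sub hg hpos]
  simp only [mul_neg, sum_neg_distrib] at this
  simp only [div_eq_mul_inv]
  linarith

end PairForce

theorem tendsto_div_atTop_of_tendsto_nhdsGT_zero {α : Type*} {l : Filter α} {f g : α → ℝ}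
    {c : ℝ} (hc : 0 < c) (hf : Tendsto f l (𝓝 c)) (hg : Tendsto g l (𝓝[>] 0)) :
    Tendsto (fun t => f t / g t) l atTop := by
  simpa only [div_eq_mul_inv, Function.comp_def] using
    hf.pos_mul_atTop hc (tendsto_inv_nhdsGT_zero.comp hg)

theorem tendsto_cos_div_sin_nhdsGT_zero : Tendsto (fun t => cos t / sin t) (𝓝[>] 0) atTop :=
  tendsto_div_atTop_of_tendsto_nhdsGT_zero one_pos
    ((continuous_cos.tendsto' 0 1 cos_zero).mono_left nhdsWithin_le_nhds)
    (tendsto_nhdsWithin_iff.2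
      ⟨(continuous_sin.tendsto' 0 0 sin_zero).mono_left nhdsWithin_le_nhds,
      eventually_of_mem (Ioo_mem_nhdsGT pi_pos) fun _ ht => sin_pos_of_pos_of_lt_pi ht.1 ht.2⟩)

theorem tendsto_cosh_div_sinh_nhdsGT_zero :
    Tendsto (fun t => cosh t / sinh t) (𝓝[>] 0) atTop :=
  tendsto_div_atTop_of_tendsto_nhdsGT_zero one_pos
    ((continuous_cosh.tendsto' 0 1 cosh_zero).mono_left nhdsWithin_le_nhds)
    (tendsto_nhdsWithin_iff.2
      ⟨(continuous_sinh.tendsto' 0 0 sinh_zero).mono_left nhdsWithin_le_nhds,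
      eventually_of_mem self_mem_nhdsWithin fun _ ht => sinh_pos_iff.2 ht⟩)

theorem tendsto_sinh_atTop : Tendsto sinh atTop atTop :=
  tendsto_atTop_mono' _ (eventually_of_mem (Ici_mem_atTop 0) fun _ ht => self_le_sinh_iff.2 ht)
    tendsto_id

theorem hasDerivAt_cos_div_sin {t : ℝ} (ht : sin t ≠ 0) :
    HasDerivAt (fun t => cos t / sin t) (-(sin t ^ 2)⁻¹) t := by
  refine ((hasDerivAt_cos t).div (hasDerivAt_sin t) ht).congr_deriv ?_
  field_simp
  linear_combination -sin_sq_add_cos_sq t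

theorem hasDerivAt_cosh_div_sinh {t : ℝ} (ht : sinh t ≠ 0) :
    HasDerivAt (fun t => cosh t / sinh t) (-(sinh t ^ 2)⁻¹) t := by
  refine ((hasDerivAt_cosh t).div (hasDerivAt_sinh t) ht).congr_deriv ?_
  field_simp
  linear_combination -cosh_sq_sub_sinh_sq t

def circleXZ (θ : ℝ) : V4 := ![cos θ, 0, sin θ, 0]

def circleXZTangent (θ : ℝ) : V4 := ![-sin θ, 0, cos θ, 0]

theorem circleXZ_mem_sphere3 (θ : ℝ) : circleXZ θ ∈ sphere3 := by
  simp [sphere3, circleXZ, add_comm]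

theorem circleXZTangent_ne_zero (θ : ℝ) : circleXZTangent θ ≠ 0 := by
  intro h
  have h0 := congrFun h 0
  have h2 := congrFun h 2
  simp only [circleXZTangent, Matrix.cons_val_zero, Matrix.cons_val_two, Matrix.tail_cons,
    Matrix.head_cons, Pi.zero_apply, neg_eq_zero] at h0 h2
  simpa [h0, h2] using sin_sq_add_cos_sq θ

theorem dS_circleXZ {s t : ℝ} (h : |s - t| ≤ π) : dS (circleXZ s) (circleXZ t) = |s - t| := by
  have hdot : dot4 (circleXZ s) (circleXZ t) = cos |s - t| := by
    simp [dot4, circleXZ, cos_sub]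
  rw [dS, hdot, arccos_cos (abs_nonneg _) h]

theorem sub_cos_dS_smul_circleXZ {s t : ℝ} (h : |s - t| ≤ π) :
    circleXZ t - cos (dS (circleXZ s) (circleXZ t)) • circleXZ s
      = sin (t - s) • circleXZTangent s := by
  rw [dS_circleXZ h, cos_abs]
  ext i
  fin_cases i <;> simp [circleXZ, circleXZTangent, cos_sub, sin_sub]
  · linear_combination (-cos t) * sin_sq_add_cos_sq s
  · linear_combination (-sin t) * sin_sq_add_cos_sq s

theorem gradUS_circleXZ (m : Fin N → ℝ) {θ : Fin N → ℝ} (hθ : ∀ i j, |θ i - θ j| ≤ π)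
    (k : Fin N) :
    gradUS m (fun i => circleXZ (θ i)) k = pairForce sin m θ k • circleXZTangent (θ k) := by
  rw [gradUS, pairForce, sum_smul]
  refine sum_congr rfl fun j _ => ?_
  rw [sub_cos_dS_smul_circleXZ (hθ k j), dS_circleXZ (hθ k j),
    ← abs_sin_eq_sin_abs_of_abs_le_pi (hθ k j), ← neg_sub (θ j), sin_neg, abs_neg, smul_smul]

theorem gradIS_circleXZ (m θ : Fin N → ℝ) (k : Fin N) :
    gradIS m (fun i => circleXZ (θ i)) k
      = (-(2 * m k * cos (θ k) * sin (θ k))) • circleXZTangent (θ k) := by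
  ext i
  fin_cases i <;> simp [gradIS, circleXZ, circleXZTangent] <;> ring

theorem circleXZ_injOn : Set.InjOn circleXZ (Set.Icc 0 π) :=
  fun _ hs _ ht h => injOn_cos hs ht (congrFun h 0)

theorem circleXZ_ne_neg_circleXZ {s t : ℝ} (hs : 0 < sin s) (ht : 0 < sin t) :
    circleXZ s ≠ -circleXZ t := fun h => by
  have := congrFun h 2
  simp [circleXZ] at this
  linarith

def hyperbolaXW (s : ℝ) : V4 := ![sinh s, 0, 0, cosh s]

def hyperbolaXWTangent (s : ℝ) : V4 := ![cosh s, 0, 0, sinh s]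

theorem hyperbolaXW_mem_hyper3 (s : ℝ) : hyperbolaXW s ∈ hyper3 := by
  refine ⟨?_, by simpa [hyperbolaXW] using cosh_pos s⟩
  simp [hyperbolaXW]
  linear_combination -cosh_sq_sub_sinh_sq s

theorem arcosh_cosh (a : ℝ) : _root_.arcosh (cosh a) = |a| := by
  have hsq : cosh a ^ 2 - 1 = sinh |a| ^ 2 := by
    rw [← abs_sinh, sq_abs]
    linear_combination cosh_sq_sub_sinh_sq a
  rw [_root_.arcosh, hsq, sqrt_sq (sinh_nonneg_iff.2 (abs_nonneg a)), ← cosh_abs,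
    cosh_add_sinh, log_exp]

theorem dH_hyperbolaXW (s t : ℝ) : dH (hyperbolaXW s) (hyperbolaXW t) = |s - t| := by
  have hdot : -mdot4 (hyperbolaXW s) (hyperbolaXW t) = cosh (s - t) := by
    simp [mdot4, hyperbolaXW, cosh_sub]
  rw [dH, hdot, arcosh_cosh]

theorem sub_cosh_dH_smul_hyperbolaXW (s t : ℝ) :
    hyperbolaXW t - cosh (dH (hyperbolaXW s) (hyperbolaXW t)) • hyperbolaXW s
      = sinh (t - s) • hyperbolaXWTangent s := by
  rw [dH_hyperbolaXW, cosh_abs]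
  ext i
  fin_cases i <;> simp [hyperbolaXW, hyperbolaXWTangent, cosh_sub, sinh_sub]
  · linear_combination (-sinh t) * cosh_sq_sub_sinh_sq s
  · linear_combination (-cosh t) * cosh_sq_sub_sinh_sq s

theorem gradUH_hyperbolaXW (m s : Fin N → ℝ) (k : Fin N) :
    gradUH m (fun i => hyperbolaXW (s i)) k
      = pairForce sinh m s k • hyperbolaXWTangent (s k) := by
  rw [gradUH, pairForce, sum_smul]
  refine sum_congr rfl fun j _ => ?_
  rw [sub_cosh_dH_smul_hyperbolaXW, dH_hyperbolaXW, ← abs_sinh, ← neg_sub (s j), sinh_neg,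
    abs_neg, smul_smul]

theorem gradIH_hyperbolaXW (m s : Fin N → ℝ) (k : Fin N) :
    gradIH m (fun i => hyperbolaXW (s i)) k
      = (2 * m k * sinh (s k) * cosh (s k)) • hyperbolaXWTangent (s k) := by
  ext i
  fin_cases i <;> simp [gradIH, hyperbolaXW, hyperbolaXWTangent] <;> ring

theorem hyperbolaXW_injective : Function.Injective hyperbolaXW :=
  fun _ _ h => sinh_injective (congrFun h 0)

theorem exists_strictMono_pairForce_sinh_eq {m : Fin N → ℝ} (hm : ∀ i, 0 < m i) :
    ∃ s : Fin N → ℝ, StrictMono s ∧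
      ∀ k, pairForce sinh m s k = -(2 * m k * sinh (s k) * cosh (s k)) := by
  set φ : ℝ → ℝ := fun t => cosh t / sinh t
  set ψ : ℝ → ℝ := fun t => sinh t ^ 2
  set w : Fin N → ℝ := fun i => 0 + (i : ℕ) * 1
  set E := energy m φ ψ w
  obtain ⟨R, hRN, hR⟩ : ∃ R : ℝ, N ≤ R ∧ ∀ i, E < m i * ψ R :=
    ((eventually_ge_atTop _).and (eventually_all.2 fun i =>
      (((tendsto_pow_atTop two_ne_zero).comp tendsto_sinh_atTop).const_mul_atTop
        (hm i)).eventually_gt_atTop E)).exists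
  obtain ⟨δ, ⟨hδ0, hδ1⟩, hδ⟩ : ∃ δ ∈ Set.Ioo (0 : ℝ) 1, ∀ i j, E < m i * m j * φ δ :=
    (Filter.Eventually.and (Ioo_mem_nhdsGT one_pos) (eventually_all.2 fun i => eventually_all.2
      fun j => (tendsto_cosh_div_sinh_nhdsGT_zero.const_mul_atTop
        (mul_pos (hm i) (hm j))).eventually_gt_atTop E)).exists
  have hsinh : ∀ {t}, δ ≤ t → 0 < sinh t := fun ht => sinh_pos_iff.2 (hδ0.trans_le ht)
  obtain ⟨p, ⟨-, hgap⟩, hmin⟩ := exists_isLocalMin_energy (a := -R) (b := R)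
    (fun i => (hm i).le) (fun t ht => div_nonneg (cosh_pos t).le (hsinh ht.1).le)
    (fun t _ => sq_nonneg (sinh t))
    (continuous_cosh.continuousOn.div continuous_sinh.continuousOn fun t ht => (hsinh ht.1).ne')
    (by fun_prop)
    (gapBox_mono (by linarith [N.cast_nonneg (α := ℝ)]) (by linarith) hδ1.le
      (add_mul_mem_gapBox 0 zero_le_one))
    (fun i => by rw [sinh_neg, neg_sq]; exact hR i) hR (fun i j _ => hδ i j)
  have hpos : ∀ i j, i < j → 0 < sinh (p j - p i) := fun i j hij =>
    hsinh (by linarith [hgap i j hij])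
  refine ⟨p, fun i j hij => by linarith [hgap i j hij], fun k => ?_⟩
  rw [pairForce_eq_of_isLocalMin (ψ' := fun t => 2 * sinh t * cosh t) hmin sinh_neg hpos
    (fun i j hij => hasDerivAt_cosh_div_sinh (hpos i j hij).ne')
    (fun i => ((hasDerivAt_sinh (p i)).pow 2).congr_deriv (by ring))]
  ring

theorem exists_pos_sum_mul_cos_sq_lt {m : Fin N → ℝ} (hm : ∀ i, 0 < m i) :
    ∃ ε : ℝ, 0 < ε ∧ N * ε < π / 4 ∧
      ∀ i, ∑ j, m j * cos (π / 2 + (j : ℕ) * ε) ^ 2 < m i / 4 := by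
  have hN : Tendsto (fun ε : ℝ => (N : ℝ) * ε) (𝓝[>] 0) (𝓝 0) :=
    ((continuous_const_mul (N : ℝ)).tendsto' 0 0 (mul_zero _)).mono_left nhdsWithin_le_nhds
  have hI : Tendsto (fun ε : ℝ => ∑ j, m j * cos (π / 2 + (j : ℕ) * ε) ^ 2) (𝓝[>] 0) (𝓝 0) := by
    have : Continuous fun ε : ℝ => ∑ j, m j * cos (π / 2 + (j : ℕ) * ε) ^ 2 := by fun_prop
    simpa using (this.tendsto 0).mono_left nhdsWithin_le_nhds
  exact (eventually_mem_nhdsWithin.and ((hN.eventually (gt_mem_nhds (by positivity))).and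
    (eventually_all.2 fun i => hI.eventually (gt_mem_nhds (by linarith [hm i]))))).exists

theorem exists_strictMono_pairForce_sin_eq {m : Fin N → ℝ} (hm : ∀ i, 0 < m i) :
    ∃ θ : Fin N → ℝ, ∃ K : ℝ, (∀ i, π / 4 < θ i ∧ θ i < 3 * π / 4) ∧ StrictMono θ ∧
      ∀ k, pairForce sin m θ k = K * (2 * m k * cos (θ k) * sin (θ k)) := by
  obtain ⟨ε, hε0, hεN, hεI⟩ := exists_pos_sum_mul_cos_sq_lt hm
  set φ : ℝ → ℝ := fun t => cos t / sin t
  set w : Fin N → ℝ := fun i => π / 2 + (i : ℕ) * ε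
  set I := ∑ j, m j * cos (w j) ^ 2
  set P := ∑ j, ∑ i ∈ Iio j, m i * m j * φ (w j - w i)
  have hE : ∀ K, energy m φ (fun t => K * cos t ^ 2) w = P + K * I := fun K => by
    simp only [energy, I, mul_sum, mul_left_comm]
    rfl
  obtain ⟨K, hK0, hK⟩ : ∃ K : ℝ, 0 ≤ K ∧ ∀ i, P < K * (m i / 2 - I) :=
    ((eventually_ge_atTop 0).and (eventually_all.2 fun i =>
      (tendsto_id.atTop_mul_const (by linarith [hεI i, hm i])).eventually_gt_atTop P)).exists
  obtain ⟨δ, ⟨hδ0, hδε⟩, hδ⟩ : ∃ δ ∈ Set.Ioo 0 ε, ∀ i j, P + K * I < m i * m j * φ δ :=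
    (Filter.Eventually.and (Ioo_mem_nhdsGT hε0) (eventually_all.2 fun i => eventually_all.2
      fun j => (tendsto_cos_div_sin_nhdsGT_zero.const_mul_atTop
        (mul_pos (hm i) (hm j))).eventually_gt_atTop _)).exists
  have hsin : ∀ t ∈ Set.Icc δ (3 * π / 4 - π / 4), 0 < sin t := fun t ht =>
    sin_pos_of_pos_of_lt_pi (by linarith [ht.1]) (by linarith [ht.2, pi_pos])
  have hcos₁ : cos (π / 4) ^ 2 = 1 / 2 := by
    rw [cos_pi_div_four, div_pow, sq_sqrt zero_le_two]; norm_num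
  have hcos₃ : cos (3 * π / 4) ^ 2 = 1 / 2 := by
    rw [show 3 * π / 4 = π - π / 4 by ring, cos_pi_sub, neg_sq, hcos₁]
  obtain ⟨p, ⟨hbox, hgap⟩, hmin⟩ :=
    exists_isLocalMin_energy (φ := φ) (ψ := fun t => K * cos t ^ 2) (fun i => (hm i).le)
    (fun t ht => div_nonneg (cos_nonneg_of_mem_Icc ⟨by linarith [ht.1, pi_pos],
      by linarith [ht.2]⟩) (hsin t ht).le)
    (fun t _ => by positivity)
    (continuous_cos.continuousOn.div continuous_sin.continuousOn fun t ht => (hsin t ht).ne')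
    (by fun_prop)
    (gapBox_mono (by linarith [pi_pos]) (by linarith) hδε.le (add_mul_mem_gapBox (π / 2) hε0.le))
    (fun i => by rw [hE, hcos₁]; linarith [hK i]) (fun i => by rw [hE, hcos₃]; linarith [hK i])
    (fun i j _ => by rw [hE]; exact hδ i j)
  have hpos : ∀ i j, i < j → 0 < sin (p j - p i) := fun i j hij =>
    sin_pos_of_pos_of_lt_pi (by linarith [hgap i j hij])
      (by linarith [(hbox i).1, (hbox j).2, pi_pos])
  refine ⟨p, K, hbox, fun i j hij => by linarith [hgap i j hij], fun k => ?_⟩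
  rw [pairForce_eq_of_isLocalMin (ψ' := fun t => K * (2 * cos t * -sin t)) hmin sin_neg hpos
    (fun i j hij => hasDerivAt_cos_div_sin (hpos i j hij).ne')
    (fun i => (((hasDerivAt_cos (p i)).pow 2).const_mul K).congr_deriv (by ring))]
  ring

theorem exists_centralConfiguration_sphere3 (hN : 2 ≤ N) {m : Fin N → ℝ} (hm : ∀ i, 0 < m i) :
    ∃ (q : Fin N → V4) (lam : ℝ), (∀ i, q i ∈ sphere3) ∧
      (∀ i j, i ≠ j → q i ≠ q j ∧ q i ≠ -q j) ∧
      (∀ i, gradUS m q i = lam • gradIS m q i) ∧ (∃ i, gradUS m q i ≠ 0) := by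
  obtain ⟨n, rfl⟩ : ∃ n, N = n + 2 := ⟨N - 2, by omega⟩
  obtain ⟨θ, K, hθ, hθmono, hθforce⟩ := exists_strictMono_pairForce_sin_eq hm
  have hθπ : ∀ i j, |θ i - θ j| ≤ π := fun i j =>
    abs_sub_le_iff.2 ⟨by linarith [hθ i, hθ j], by linarith [hθ i, hθ j]⟩
  have hθIcc : ∀ i, θ i ∈ Set.Icc 0 π := fun i =>
    ⟨by linarith [hθ i, pi_pos], by linarith [hθ i, pi_pos]⟩
  have hsin : ∀ i, 0 < sin (θ i) := fun i =>
    sin_pos_of_pos_of_lt_pi (by linarith [hθ i, pi_pos]) (by linarith [hθ i, pi_pos])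
  refine ⟨fun i => circleXZ (θ i), -K, fun i => circleXZ_mem_sphere3 _, fun i j hij =>
    ⟨fun h => hθmono.injective.ne hij (circleXZ_injOn (hθIcc i) (hθIcc j) h),
      circleXZ_ne_neg_circleXZ (hsin i) (hsin j)⟩, fun k => ?_, ⟨0, ?_⟩⟩
  · rw [gradUS_circleXZ m hθπ, gradIS_circleXZ, hθforce, smul_smul]
    congr 1
    ring
  · have hsin_sub : ∀ j ≠ 0, 0 < sin (θ j - θ 0) := fun j hj =>
      sin_pos_of_pos_of_lt_pi (by linarith [hθmono (Fin.pos_iff_ne_zero.2 hj)])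
        (by linarith [hθ 0, hθ j, pi_pos])
    rw [gradUS_circleXZ m hθπ]
    exact smul_ne_zero (pairForce_pos hm hsin_sub (j := 1) one_ne_zero).ne'
      (circleXZTangent_ne_zero _)

theorem exists_centralConfiguration_hyper3 {m : Fin N → ℝ} (hm : ∀ i, 0 < m i) :
    ∃ (q : Fin N → V4) (lam : ℝ), (∀ i, q i ∈ hyper3) ∧
      (∀ i j, i ≠ j → q i ≠ q j) ∧
      (∀ i, gradUH m q i = lam • gradIH m q i) := by
  obtain ⟨s, hsmono, hsforce⟩ := exists_strictMono_pairForce_sinh_eq hm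
  refine ⟨fun i => hyperbolaXW (s i), -1, fun i => hyperbolaXW_mem_hyper3 _,
    fun i j hij h => hsmono.injective.ne hij (hyperbolaXW_injective h), fun k => ?_⟩
  rw [gradUH_hyperbolaXW, gradIH_hyperbolaXW, hsforce, smul_smul]
  congr 1
  ring

end CentralConfiguration

open CentralConfiguration in
/-- Existence of ordinary central configurations in `S³` and of
central configurations in `H³` for any given masses. -/
theorem statement13 (N : ℕ) (hN : 2 ≤ N) (m : Fin N → ℝ) (hm : ∀ i, 0 < m i) :
    (∃ (q : Fin N → V4) (lam : ℝ), (∀ i, q i ∈ sphere3) ∧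
      (∀ i j, i ≠ j → q i ≠ q j ∧ q i ≠ -q j) ∧
      (∀ i, gradUS m q i = lam • gradIS m q i) ∧ (∃ i, gradUS m q i ≠ 0)) ∧
    (∃ (q : Fin N → V4) (lam : ℝ), (∀ i, q i ∈ hyper3) ∧
      (∀ i j, i ≠ j → q i ≠ q j) ∧
      (∀ i, gradUH m q i = lam • gradIH m q i)) := by
  exact ⟨exists_centralConfiguration_sphere3 hN hm, exists_centralConfiguration_hyper3 hm⟩
end
end
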